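/- arXiv:2404.05681 — 10 statements merged into one kernel-verified Lean document; each statement's English description precedes it below -/
import Mathlib

section
/- Let I be a finite set of items with weights w_i ∈ ℕ and profits p_i ∈ ℕ. Suppose x ∈ {0,1}^I is a Pareto optimum of the weight sequence, meaning every y ∈ {0,1}^I with p_I(y) ≥ p_I(x) satisfies w_I(y) ≥ w_I(x). Then for any subset J ⊆ I and any y ∈ {0,1}^I with w_J(y) ≤ w_J(x) and p_J(y) ≥ p_J(x), it holds that w_J(y) = w_J(x). -/
/-- If `x` is a Pareto optimum of the weight sequence (any selection with total profit at
least `p_I(x)` has total weight at least `w_I(x)`), then for any subset `J` and any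
selection `y` with `w_J(y) ≤ w_J(x)` and `p_J(y) ≥ p_J(x)`, necessarily
`w_J(y) = w_J(x)`. -/
theorem pareto_weight_restriction {ι : Type*} [Fintype ι]
    (w p : ι → ℕ) (x : ι → ℕ) (hx : ∀ i, x i ≤ 1)
    (hpareto : ∀ y : ι → ℕ, (∀ i, y i ≤ 1) →
      (∑ i, p i * x i) ≤ (∑ i, p i * y i) → (∑ i, w i * x i) ≤ (∑ i, w i * y i))
    (J : Finset ι) (y : ι → ℕ) (hy : ∀ i, y i ≤ 1)
    (hwJ : (∑ i ∈ J, w i * y i) ≤ ∑ i ∈ J, w i * x i)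
    (hpJ : (∑ i ∈ J, p i * x i) ≤ ∑ i ∈ J, p i * y i) :
    (∑ i ∈ J, w i * y i) = ∑ i ∈ J, w i * x i := by
  classical
  set z : ι → ℕ := fun i => if i ∈ J then y i else x i with hz
  have hz1 : ∀ i, z i ≤ 1 := fun i => by
    simp only [hz]; split <;> [exact hy i; exact hx i]
  have hsplit : ∀ f : ι → ℕ,
      (∑ i, f i * z i) = (∑ i ∈ J, f i * y i) + ∑ i ∈ Jᶜ, f i * x i := by
    intro f
    rw [← Finset.sum_add_sum_compl J]
    congr 1
    · exact Finset.sum_congr rfl fun i hi => by simp [hz, hi]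
    · exact Finset.sum_congr rfl fun i hi => by
        simp only [Finset.mem_compl] at hi; simp [hz, hi]
  have hxsplit : ∀ f : ι → ℕ,
      (∑ i, f i * x i) = (∑ i ∈ J, f i * x i) + ∑ i ∈ Jᶜ, f i * x i := by
    intro f; rw [← Finset.sum_add_sum_compl J]
  have hp : (∑ i, p i * x i) ≤ ∑ i, p i * z i := by
    rw [hsplit, hxsplit]; omega
  have hw := hpareto z hz1 hp
  rw [hsplit, hxsplit] at hw
  omega
end

section
/- Let A, B ∈ ℤ^n be two sequences indexed by {0,…,n−1}, with A monotone non-decreasing. Let pm(B) denote the prefix-maxima sequence of B, i.e., pm(B)[i] = max{B[j] : 0 ≤ j ≤ i}. Define the max-plus convolution (A ⋆ B)[k] = max_{i+j=k, 0≤i,j<n} (A[i] + B[j]). Then for every index k with 0 ≤ k < n, we have (A ⋆ pm(B))[k] = (A ⋆ B)[k]. -/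
/-- Max-plus convolution of `A` (defined on indices `0,…,m−1`) and `B` (defined on
indices `0,…,m'−1`), with out-of-bounds entries interpreted as `⊥ = −∞`. -/
def maxPlusConv (m m' : ℕ) (A B : ℕ → ℤ) (k : ℕ) : WithBot ℤ :=
  ((Finset.range m ×ˢ Finset.range m').filter fun q => q.1 + q.2 = k).sup
    fun q => ((A q.1 + B q.2 : ℤ) : WithBot ℤ)

/-- Prefix maxima: `prefixMax B i = max {B j : 0 ≤ j ≤ i}`. -/
def prefixMax (B : ℕ → ℤ) (i : ℕ) : ℤ :=
  (Finset.range (i + 1)).sup' (Finset.nonempty_range_iff.mpr (Nat.succ_ne_zero i)) B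

/-- If `A` is monotone non-decreasing, then the first half of the max-plus convolution of
`A` with the prefix-maxima sequence of `B` coincides with the first half of the max-plus
convolution of `A` with `B`. -/
theorem maxPlusConv_prefixMax_firstHalf (n : ℕ) (A B : ℕ → ℤ)
    (hA : ∀ i j, i ≤ j → j < n → A i ≤ A j) :
    ∀ k < n, maxPlusConv n n A (prefixMax B) k = maxPlusConv n n A B k := by
  intro k hk
  apply le_antisymm
  · apply Finset.sup_le
    intro q hq
    simp only [Finset.mem_filter, Finset.mem_product, Finset.mem_range] at hq
    obtain ⟨⟨hi, hj⟩, hij⟩ := hq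
    obtain ⟨j', hj'mem, hj'⟩ := Finset.exists_mem_eq_sup'
      (Finset.nonempty_range_iff.mpr (Nat.succ_ne_zero q.2)) B
    rw [Finset.mem_range] at hj'mem
    have hj'le : j' ≤ q.2 := Nat.lt_succ_iff.mp hj'mem
    have hj'k : j' ≤ k := le_trans hj'le (hij ▸ Nat.le_add_left _ _)
    have hi' : q.1 ≤ k - j' := by omega
    have hk' : k - j' < n := by omega
    have hA' : A q.1 ≤ A (k - j') := hA _ _ hi' hk'
    have hmem : (k - j', j') ∈ (Finset.range n ×ˢ Finset.range n).filter
        fun q => q.1 + q.2 = k := by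
      simp only [Finset.mem_filter, Finset.mem_product, Finset.mem_range]
      omega
    calc ((A q.1 + prefixMax B q.2 : ℤ) : WithBot ℤ)
        ≤ ((A (k - j') + B j' : ℤ) : WithBot ℤ) := by
          rw [prefixMax, hj']
          exact_mod_cast add_le_add hA' le_rfl
      _ ≤ _ := Finset.le_sup (f := fun q => ((A q.1 + B q.2 : ℤ) : WithBot ℤ)) hmem
  · apply Finset.sup_le
    intro q hq
    have hBle : B q.2 ≤ prefixMax B q.2 :=
      Finset.le_sup' B (Finset.mem_range.mpr (Nat.lt_succ_self q.2))
    calc ((A q.1 + B q.2 : ℤ) : WithBot ℤ)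
        ≤ ((A q.1 + prefixMax B q.2 : ℤ) : WithBot ℤ) := by
          exact_mod_cast add_le_add le_rfl hBle
      _ ≤ _ := Finset.le_sup (f := fun q => ((A q.1 + prefixMax B q.2 : ℤ) : WithBot ℤ)) hq
end

section
/- Let n be even, A, B ∈ ℤ^n with A monotone non-decreasing, and split A into halves A₁ = A[0…n/2−1], A₂ = A[n/2…n−1] and similarly B into B₁, B₂. Let pm denote the prefix-maxima operation. Define, for 0 ≤ k ≤ 2n−2, C[k] = max{ (A₁ ⋆ pm(B₁))[k], (A₁ ⋆ pm(B₂))[k−n/2], (A₂ ⋆ B₁)[k−n/2], (A₂ ⋆ B₂)[k−n] }, where out-of-range terms are ignored (treated as −∞). Then C[k] = (A ⋆ B)[k] for all 0 ≤ k ≤ 2n−2. -/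
section MaxPlusConv

variable {m m' n n' k : ℕ} {A B : ℕ → ℤ}

lemma le_maxPlusConv {i j : ℕ} (hi : i < m) (hj : j < m') (hk : i + j = k) :
    ((A i + B j : ℤ) : WithBot ℤ) ≤ maxPlusConv m m' A B k :=
  Finset.le_sup (f := fun q => ((A q.1 + B q.2 : ℤ) : WithBot ℤ)) (b := (i, j))
    (by simp [hi, hj, hk])

lemma maxPlusConv_le {x : WithBot ℤ}
    (h : ∀ i j, i < m → j < m' → i + j = k → ((A i + B j : ℤ) : WithBot ℤ) ≤ x) :
    maxPlusConv m m' A B k ≤ x := by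
  refine Finset.sup_le fun ⟨i, j⟩ hij => ?_
  simp only [Finset.mem_filter, Finset.mem_product, Finset.mem_range] at hij
  exact h i j hij.1.1 hij.1.2 hij.2

lemma maxPlusConv_mono_right {B' : ℕ → ℤ} (hB : ∀ j < m', B j ≤ B' j) :
    maxPlusConv m m' A B k ≤ maxPlusConv m m' A B' k :=
  maxPlusConv_le fun _ j hi hj hk =>
    (WithBot.coe_le_coe.mpr (add_le_add_right (hB j hj) _)).trans (le_maxPlusConv hi hj hk)

lemma maxPlusConv_mono_size (hm : m ≤ n) (hm' : m' ≤ n') :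
    maxPlusConv m m' A B k ≤ maxPlusConv n n' A B k :=
  maxPlusConv_le fun _ _ hi hj hk => le_maxPlusConv (by omega) (by omega) hk

lemma maxPlusConv_shift_le {a b l : ℕ} (ha : a + m ≤ n) (hb : b + m' ≤ n')
    (hl : a + b + k = l) :
    maxPlusConv m m' (fun i => A (a + i)) (fun j => B (b + j)) k ≤ maxPlusConv n n' A B l :=
  maxPlusConv_le fun _ _ hi hj hk => le_maxPlusConv (by omega) (by omega) (by omega)

lemma le_prefixMax (B : ℕ → ℤ) {j j' : ℕ} (h : j' ≤ j) : B j' ≤ prefixMax B j :=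
  Finset.le_sup' B (Finset.mem_range.mpr (Nat.lt_succ_of_le h))

lemma exists_prefixMax_eq (B : ℕ → ℤ) (j : ℕ) : ∃ j' ≤ j, prefixMax B j = B j' := by
  obtain ⟨j', hj', h⟩ := Finset.exists_mem_eq_sup' (Finset.nonempty_range_iff.mpr
    (Nat.succ_ne_zero j)) B
  exact ⟨j', Nat.lt_succ_iff.mp (Finset.mem_range.mp hj'), h⟩

lemma maxPlusConv_prefixMax_le (hA : MonotoneOn A (Set.Iio n)) (hn : m + m' ≤ n + 1) :
    maxPlusConv m m' A (prefixMax B) k ≤ maxPlusConv n m' A B k := by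
  refine maxPlusConv_le fun i j hi hj hk => ?_
  obtain ⟨j', hj', hBj⟩ := exists_prefixMax_eq B j
  have hAi : A i ≤ A (i + (j - j')) :=
    hA (Set.mem_Iio.mpr (by omega)) (Set.mem_Iio.mpr (by omega)) (by omega)
  rw [hBj]
  exact (WithBot.coe_le_coe.mpr (add_le_add_left hAi _)).trans
    (le_maxPlusConv (by omega) (by omega) (by omega))

lemma maxPlusConv_two_mul_le_split (m : ℕ) (A B : ℕ → ℤ) (k : ℕ) :
    maxPlusConv (2 * m) (2 * m) A B k ≤
      (maxPlusConv m m A B k)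
      ⊔ (if m ≤ k then maxPlusConv m m A (fun j => B (m + j)) (k - m) else ⊥)
      ⊔ (if m ≤ k then maxPlusConv m m (fun i => A (m + i)) B (k - m) else ⊥)
      ⊔ (if 2 * m ≤ k then
          maxPlusConv m m (fun i => A (m + i)) (fun j => B (m + j)) (k - 2 * m) else ⊥) := by
  refine maxPlusConv_le fun i j hi hj hk => ?_
  rcases lt_or_ge i m with hi₁ | hi₂ <;> rcases lt_or_ge j m with hj₁ | hj₂
  · exact le_sup_of_le_left <| le_sup_of_le_left <| le_sup_of_le_left <|
      le_maxPlusConv hi₁ hj₁ hk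
  · refine le_sup_of_le_left <| le_sup_of_le_left <| le_sup_of_le_right ?_
    rw [if_pos (by omega), ← Nat.add_sub_cancel' hj₂]
    exact le_maxPlusConv (B := fun j => B (m + j)) hi₁ (by omega) (by omega)
  · refine le_sup_of_le_left <| le_sup_of_le_right ?_
    rw [if_pos (by omega), ← Nat.add_sub_cancel' hi₂]
    exact le_maxPlusConv (A := fun i => A (m + i)) (by omega) hj₁ (by omega)
  · refine le_sup_of_le_right ?_
    rw [if_pos (by omega), ← Nat.add_sub_cancel' hi₂, ← Nat.add_sub_cancel' hj₂]
    exact le_maxPlusConv (A := fun i => A (m + i)) (B := fun j => B (m + j))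
      (by omega) (by omega) (by omega)

end MaxPlusConv

theorem maxPlusConv_recursion_general (m : ℕ) (A B : ℕ → ℤ)
    (hA : ∀ i j, i ≤ j → j < 2 * m → A i ≤ A j) :
    ∀ k ≤ 4 * m - 2,
      maxPlusConv (2 * m) (2 * m) A B k =
        (maxPlusConv m m A (prefixMax B) k)
        ⊔ (if m ≤ k then maxPlusConv m m A (prefixMax fun j => B (m + j)) (k - m) else ⊥)
        ⊔ (if m ≤ k then maxPlusConv m m (fun i => A (m + i)) B (k - m) else ⊥)
        ⊔ (if 2 * m ≤ k then
            maxPlusConv m m (fun i => A (m + i)) (fun j => B (m + j)) (k - 2 * m) else ⊥) := by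
  intro k _
  have hAmono : MonotoneOn A (Set.Iio (2 * m)) := fun i _ j hj hij => hA i j hij hj
  apply le_antisymm
  · refine (maxPlusConv_two_mul_le_split m A B k).trans ?_
    gcongr
    · exact maxPlusConv_mono_right fun j _ => le_prefixMax B le_rfl
    · split_ifs
      exacts [maxPlusConv_mono_right fun j _ => le_prefixMax _ le_rfl, le_rfl]
  refine sup_le (sup_le (sup_le ?_ ?_) ?_) ?_
  · exact (maxPlusConv_prefixMax_le hAmono (by omega)).trans
      (maxPlusConv_mono_size le_rfl (by omega))
  all_goals split_ifs <;> [skip; exact bot_le]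
  · refine (maxPlusConv_prefixMax_le hAmono (by omega)).trans ?_
    simpa only [zero_add] using maxPlusConv_shift_le (A := A) (m := 2 * m) (m' := m)
      (n := 2 * m) (n' := 2 * m) (a := 0) (b := m) (k := k - m) (l := k)
      (by omega) (by omega) (by omega)
  · simpa only [zero_add] using maxPlusConv_shift_le (B := B) (m' := m) (n' := 2 * m)
      (a := m) (b := 0) (k := k - m) (l := k) (by omega) (by omega) (by omega)
  · refine maxPlusConv_shift_le ?_ ?_ ?_ <;> omega

/-- For sequences of even length `n = 2m` with `A` monotone non-decreasing, splitting
`A` and `B` into halves `A₁, A₂, B₁, B₂`, the max-plus convolution `A ⋆ B` decomposes as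
`C[k] = max{(A₁ ⋆ pm(B₁))[k], (A₁ ⋆ pm(B₂))[k−n/2], (A₂ ⋆ B₁)[k−n/2], (A₂ ⋆ B₂)[k−n]}`,
where out-of-range terms are ignored (treated as `−∞`). -/
theorem maxPlusConv_recursion (m : ℕ) (hm : 0 < m) (A B : ℕ → ℤ)
    (hA : ∀ i j, i ≤ j → j < 2 * m → A i ≤ A j) :
    ∀ k ≤ 4 * m - 2,
      maxPlusConv (2 * m) (2 * m) A B k =
        (maxPlusConv m m A (prefixMax B) k)
        ⊔ (if m ≤ k then maxPlusConv m m A (prefixMax fun j => B (m + j)) (k - m) else ⊥)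
        ⊔ (if m ≤ k then maxPlusConv m m (fun i => A (m + i)) B (k - m) else ⊥)
        ⊔ (if 2 * m ≤ k then
            maxPlusConv m m (fun i => A (m + i)) (fun j => B (m + j)) (k - 2 * m) else ⊥) :=
  maxPlusConv_recursion_general m A B hA
end

section
/- Consider the Knapsack instance constructed from non-decreasing sequences A[0…n−1], B[0…n−1], C[0…2n−2] with entries in {0,…,2n²}: for each i an 'A-item' with weight 5n − i and profit 2n² − A[i]; for each j a 'B-item' with weight 10n − j and profit 10n² − B[j]; for each k a 'C-item' with weight 20n + k and profit 100n² + C[k]; knapsack capacity t = 35n. Then the condition (∀ i, j: C[i+j] ≤ A[i] + B[j]) holds if and only if the optimal total profit OPT of this Knapsack instance is at most 112n². -/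
/-- The item type of the Knapsack instance in the lower-bound reduction:
`n` A-items, `n` B-items, and `2n−1` C-items. -/
abbrev LBItem (n : ℕ) := Fin n ⊕ Fin n ⊕ Fin (2 * n - 1)

/-- Weights of the items: A-item `i` has weight `5n − i`, B-item `j` has weight `10n − j`,
C-item `k` has weight `20n + k`. -/
def lbWeight (n : ℕ) : LBItem n → ℕ :=
  Sum.elim (fun i => 5 * n - i.1) (Sum.elim (fun j => 10 * n - j.1) fun k => 20 * n + k.1)

/-- Profits of the items: A-item `i` has profit `2n² − A[i]`, B-item `j` has profit
`10n² − B[j]`, C-item `k` has profit `100n² + C[k]`. -/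
def lbProfit (n : ℕ) (A B C : ℕ → ℤ) : LBItem n → ℤ :=
  Sum.elim (fun i => 2 * (n : ℤ) ^ 2 - A i.1)
    (Sum.elim (fun j => 10 * (n : ℤ) ^ 2 - B j.1) fun k => 100 * (n : ℤ) ^ 2 + C k.1)

/-!
A feasible set has weight at least `(4a + 9b + 20c) n` when it contains `a` A-items, `b` B-items
and `c` C-items, so `4a + 9b + 20c ≤ 35`, and its profit is at most `(2a + 10b + 102c) n²`.
Among these triples only `(1, 1, 1)` can exceed `112 n²`. A set `{i, j, k}` of one item of each
kind is feasible iff `k ≤ i + j`, and then its profit `112 n² − A[i] − B[j] + C[k]` is at most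
`112 n² − A[i] − B[j] + C[i + j]` by monotonicity of `C`. Hence `OPT ≤ 112 n²` is exactly the
condition `C[i + j] ≤ A[i] + B[j]`, witnessed by the sets `{i, j, i + j}`.
-/

open Finset

lemma Finset.toLeft_disjSum_toRight_disjSum {α β γ : Type*} (S : Finset (α ⊕ β ⊕ γ)) :
    S.toLeft.disjSum (S.toRight.toLeft.disjSum S.toRight.toRight) = S := by
  rw [toLeft_disjSum_toRight, toLeft_disjSum_toRight]

lemma card_weighted_le_of_sum_lbWeight_le {n : ℕ} (hn : 0 < n) (SA SB : Finset (Fin n))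
    (SC : Finset (Fin (2 * n - 1)))
    (hS : ∑ x ∈ SA.disjSum (SB.disjSum SC), lbWeight n x ≤ 35 * n) :
    4 * #SA + 9 * #SB + 20 * #SC ≤ 35 := by
  simp only [lbWeight, sum_sumElim] at hS
  have wA : #SA • (4 * n + 1) ≤ ∑ i ∈ SA, (5 * n - i.1) :=
    card_nsmul_le_sum _ _ _ fun i _ => by have := i.2; omega
  have wB : #SB • (9 * n + 1) ≤ ∑ j ∈ SB, (10 * n - j.1) :=
    card_nsmul_le_sum _ _ _ fun j _ => by have := j.2; omega
  have wC : #SC • (20 * n) ≤ ∑ k ∈ SC, (20 * n + k.1) :=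
    card_nsmul_le_sum _ _ _ fun k _ => by omega
  simp only [smul_eq_mul] at wA wB wC
  refine Nat.le_of_mul_le_mul_right ?_ hn
  nlinarith

lemma sum_lbProfit_le_card {n : ℕ} {A B C : ℕ → ℤ} (hA : ∀ i < n, 0 ≤ A i)
    (hB : ∀ j < n, 0 ≤ B j) (hC : ∀ k < 2 * n - 1, C k ≤ 2 * n ^ 2)
    (SA SB : Finset (Fin n)) (SC : Finset (Fin (2 * n - 1))) :
    ∑ x ∈ SA.disjSum (SB.disjSum SC), lbProfit n A B C x ≤
      (2 * #SA + 10 * #SB + 102 * #SC : ℕ) * (n : ℤ) ^ 2 := by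
  simp only [lbProfit, sum_sumElim]
  have pA : ∑ i ∈ SA, (2 * (n : ℤ) ^ 2 - A i) ≤ #SA • (2 * (n : ℤ) ^ 2) :=
    sum_le_card_nsmul _ _ _ fun i _ => by linarith [hA i i.2]
  have pB : ∑ j ∈ SB, (10 * (n : ℤ) ^ 2 - B j) ≤ #SB • (10 * (n : ℤ) ^ 2) :=
    sum_le_card_nsmul _ _ _ fun j _ => by linarith [hB j j.2]
  have pC : ∑ k ∈ SC, (100 * (n : ℤ) ^ 2 + C k) ≤ #SC • (102 * (n : ℤ) ^ 2) :=
    sum_le_card_nsmul _ _ _ fun k _ => by linarith [hC k k.2]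
  simp only [nsmul_eq_mul] at pA pB pC
  push_cast
  linarith

lemma eq_one_or_weighted_le {a b c : ℕ} (h : 4 * a + 9 * b + 20 * c ≤ 35) :
    (a = 1 ∧ b = 1 ∧ c = 1) ∨ 2 * a + 10 * b + 102 * c ≤ 112 := by
  have hc : c ≤ 1 := by omega
  have hb : b ≤ 3 := by omega
  have ha : a ≤ 8 := by omega
  interval_cases a <;> interval_cases b <;> interval_cases c <;> omega

lemma sum_lbWeight_singletons (n : ℕ) (i j : Fin n) (k : Fin (2 * n - 1)) :
    ∑ x ∈ ({i} : Finset _).disjSum (({j} : Finset _).disjSum {k}), lbWeight n x =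
      (5 * n - i) + ((10 * n - j) + (20 * n + k)) := by
  simp [lbWeight]

lemma sum_lbProfit_singletons (n : ℕ) (A B C : ℕ → ℤ) (i j : Fin n) (k : Fin (2 * n - 1)) :
    ∑ x ∈ ({i} : Finset _).disjSum (({j} : Finset _).disjSum {k}), lbProfit n A B C x =
      112 * (n : ℤ) ^ 2 + C k - A i - B j := by
  simp only [lbProfit, sum_sumElim, sum_singleton]
  ring

lemma sum_lbProfit_le_of_forall_le {n : ℕ} (hn : 0 < n) {A B C : ℕ → ℤ}
    (hA : ∀ i < n, 0 ≤ A i) (hB : ∀ j < n, 0 ≤ B j) (hC : ∀ k < 2 * n - 1, C k ≤ 2 * n ^ 2)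
    (hCmono : ∀ k l, k ≤ l → l < 2 * n - 1 → C k ≤ C l)
    (hcond : ∀ i < n, ∀ j < n, C (i + j) ≤ A i + B j)
    (S : Finset (LBItem n)) (hS : ∑ x ∈ S, lbWeight n x ≤ 35 * n) :
    ∑ x ∈ S, lbProfit n A B C x ≤ 112 * (n : ℤ) ^ 2 := by
  rw [← S.toLeft_disjSum_toRight_disjSum] at hS ⊢
  set SA := S.toLeft
  set SB := S.toRight.toLeft
  set SC := S.toRight.toRight
  rcases eq_one_or_weighted_le (card_weighted_le_of_sum_lbWeight_le hn SA SB SC hS) with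
    ⟨hSA, hSB, hSC⟩ | hcard
  · obtain ⟨i, hi⟩ := card_eq_one.1 hSA
    obtain ⟨j, hj⟩ := card_eq_one.1 hSB
    obtain ⟨k, hk⟩ := card_eq_one.1 hSC
    rw [hi, hj, hk, sum_lbWeight_singletons] at hS
    rw [hi, hj, hk, sum_lbProfit_singletons]
    have hki : (k : ℕ) ≤ i + j := by omega
    linarith [hCmono k (i + j) hki (by omega), hcond i i.2 j j.2]
  · calc _ ≤ (2 * #SA + 10 * #SB + 102 * #SC : ℕ) * (n : ℤ) ^ 2 :=
          sum_lbProfit_le_card hA hB hC SA SB SC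
      _ ≤ 112 * (n : ℤ) ^ 2 := by gcongr; exact_mod_cast hcard

/-- In the Knapsack instance built from monotone sequences `A, B, C` with entries in
`{0,…,2n²}` and capacity `t = 35n`, the verification condition
`∀ i < n, j < n : C[i+j] ≤ A[i] + B[j]` holds iff `OPT ≤ 112n²`. -/
theorem knapsack_lower_bound_reduction (n : ℕ) (hn : 0 < n) (A B C : ℕ → ℤ)
    (hA : ∀ i < n, 0 ≤ A i ∧ A i ≤ 2 * n ^ 2)
    (hB : ∀ j < n, 0 ≤ B j ∧ B j ≤ 2 * n ^ 2)
    (hC : ∀ k < 2 * n - 1, 0 ≤ C k ∧ C k ≤ 2 * n ^ 2)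
    (hCmono : ∀ k l, k ≤ l → l < 2 * n - 1 → C k ≤ C l) :
    (∀ i < n, ∀ j < n, C (i + j) ≤ A i + B j) ↔
      ((Finset.univ : Finset (Finset (LBItem n))).filter
          (fun S => (∑ x ∈ S, lbWeight n x) ≤ 35 * n)).sup'
        ⟨∅, by simp⟩ (fun S => ∑ x ∈ S, lbProfit n A B C x) ≤ 112 * (n : ℤ) ^ 2 := by
  constructor
  · intro hcond
    refine sup'_le _ _ fun S hS => ?_
    exact sum_lbProfit_le_of_forall_le hn (fun i hi => (hA i hi).1) (fun j hj => (hB j hj).1)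
      (fun k hk => (hC k hk).2) hCmono hcond S (mem_filter.1 hS).2
  · intro hOPT i hi j hj
    have hij : i + j < 2 * n - 1 := by omega
    let T : Finset (LBItem n) :=
      ({⟨i, hi⟩} : Finset _).disjSum (({⟨j, hj⟩} : Finset _).disjSum {⟨i + j, hij⟩})
    have hT : T ∈ univ.filter (fun S => ∑ x ∈ S, lbWeight n x ≤ 35 * n) := by
      simp only [T, mem_filter, mem_univ, sum_lbWeight_singletons, true_and]
      omega
    have hprofit := (le_sup' (fun S => ∑ x ∈ S, lbProfit n A B C x) hT).trans hOPT
    simp only [T, sum_lbProfit_singletons] at hprofit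
    linarith
end

section
/- Let a₁,…,aₙ ∈ ℕ, let X₁,…,X_k be a k-element sample without replacement from {a₁,…,aₙ}, let A = Σᵢ aᵢ and a_max = maxᵢ aᵢ. Fix δ ∈ (0, 1/4). Then with probability at least 1 − δ over the random sample, |(X₁ + ⋯ + X_k) − (k/n)·A| ≤ √(A · a_max · log(n/δ)). -/
/-!
Hoeffding's argument for sampling without replacement, carried out by counting `k`-subsets.
Expanding both sides in the nonnegative variables `yᵢ - 1`, and using that a fixed `m`-set lies
in `C(n - m, k - m) ≤ C(n, k) (k/n)^m` of the `k`-subsets, gives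
`∑_{|S| = k} ∏_{i ∈ S} yᵢ ≤ C(n, k) ∏ᵢ (1 - p + p yᵢ)` with `p = k/n`: the exponential moment of
a sample without replacement is dominated by that of independent `Bernoulli(p)` selections.
Hoeffding's lemma for each factor and a Chernoff bound then show that at most
`C(n, k) exp(-2t² / ∑ aᵢ²)` subsets have a sum exceeding its mean `pA` by more than `t`, and
passing to complements gives the same bound below the mean. Since `∑ aᵢ² ≤ A a_max`, the choice
`t = √(A a_max log(n/δ))` makes both tails together at most `2 C(n, k) (δ/n)² ≤ δ C(n, k)`.
-/

open Finset Real MeasureTheory ProbabilityTheory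

-- Hoeffding's lemma for `s` times a `Bernoulli(p)` variable.
theorem one_sub_add_mul_exp_le_exp {p : ℝ} (hp0 : 0 ≤ p) (hp1 : p ≤ 1) (s : ℝ) :
    1 - p + p * exp s ≤ exp (p * s + s ^ 2 / 8) := by
  let X : Bool → ℝ := fun b => cond b s 0
  have hX : ∀ b, X b ∈ Set.Icc (min s 0) (max s 0) := by
    intro b; cases b <;> simp [X]
  have hmgf := (hasSubgaussianMGF_of_mem_Icc (μ := Ber(true, false, ⟨p, hp0, hp1⟩))
    Measurable.of_discrete.aemeasurable (ae_of_all _ hX)).mgf_le 1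
  simp only [mgf, integral_bernoulliMeasure, cond_true, smul_eq_mul, cond_false, mul_zero,
    add_zero, one_mul, zero_sub, max_sub_min_eq_abs, abs_neg, nnnorm_abs, NNReal.coe_pow,
    NNReal.coe_div, coe_nnnorm, norm_eq_abs, NNReal.coe_ofNat, one_pow, mul_one, X] at hmgf
  calc 1 - p + p * exp s = (p * exp (s - p * s) + (1 - p) * exp (-(p * s))) * exp (p * s) := by
        simp only [add_mul, mul_assoc, ← exp_add, sub_add_cancel, neg_add_cancel, exp_zero]
        ring
    _ ≤ exp ((|s| / 2) ^ 2 / 2) * exp (p * s) := by gcongr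
    _ = exp (p * s + s ^ 2 / 8) := by
        rw [← exp_add, div_pow, sq_abs]
        congr 1
        ring

theorem Nat.choose_sub_mul_pow_le_choose_mul_pow {n k m : ℕ} (hm : m ≤ k) (hk : k ≤ n) :
    (n - m).choose (k - m) * n ^ m ≤ n.choose k * k ^ m := by
  induction m with
  | zero => simp
  | succ m ih =>
    have hstep : (n - m) * (n - (m + 1)).choose (k - (m + 1)) =
        (k - m) * (n - m).choose (k - m) := by
      have := Nat.add_one_mul_choose_eq (n - (m + 1)) (k - (m + 1))
      rw [show n - (m + 1) + 1 = n - m by omega, show k - (m + 1) + 1 = k - m by omega] at this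
      rw [this, mul_comm]
    have hratio : (k - m) * n ≤ (n - m) * k := by
      rw [Nat.sub_mul, Nat.sub_mul, mul_comm k n]
      exact Nat.sub_le_sub_left (Nat.mul_le_mul_left m hk) _
    refine Nat.le_of_mul_le_mul_left ?_ (show 0 < n - m by omega)
    calc (n - m) * ((n - (m + 1)).choose (k - (m + 1)) * n ^ (m + 1))
        = (k - m) * n * ((n - m).choose (k - m) * n ^ m) := by rw [← mul_assoc, hstep]; ring
      _ ≤ (n - m) * k * (n.choose k * k ^ m) := Nat.mul_le_mul hratio (ih (by omega))
      _ = (n - m) * (n.choose k * k ^ (m + 1)) := by ring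

theorem Nat.cast_choose_sub_le_choose_mul_div_pow {n k m : ℕ} (hn : 0 < n) (hm : m ≤ k)
    (hk : k ≤ n) :
    ((n - m).choose (k - m) : ℝ) ≤ n.choose k * ((k : ℝ) / n) ^ m := by
  rw [div_pow, ← mul_div_assoc, le_div_iff₀ (by positivity)]
  exact_mod_cast Nat.choose_sub_mul_pow_le_choose_mul_pow hm hk

section
variable {ι : Type*} [Fintype ι] {k : ℕ}

theorem card_filter_superset_powersetCard [DecidableEq ι] {T : Finset ι} (hT : #T ≤ k) :
    #{S ∈ powersetCard k univ | T ⊆ S} = (Fintype.card ι - #T).choose (k - #T) := by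
  rw [← card_univ, ← card_sdiff_of_subset (subset_univ T), ← card_powersetCard]
  refine card_bij' (fun S _ => S \ T) (fun U _ => U ∪ T) ?_ ?_ ?_ ?_
  · intro S hS
    obtain ⟨⟨-, hSk⟩, hTS⟩ := And.imp_left mem_powersetCard.mp (mem_filter.mp hS)
    exact mem_powersetCard.mpr ⟨sdiff_subset_sdiff (subset_univ S) le_rfl,
      by rw [card_sdiff_of_subset hTS, hSk]⟩
  · intro U hU
    obtain ⟨hUT, hUk⟩ := mem_powersetCard.mp hU
    have hdisj : Disjoint U T := (subset_sdiff.mp hUT).2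
    refine mem_filter.mpr ⟨mem_powersetCard.mpr ⟨subset_univ _, ?_⟩, subset_union_right⟩
    rw [card_union_of_disjoint hdisj, hUk]
    omega
  · intro S hS
    exact sdiff_union_of_subset (mem_filter.mp hS).2
  · intro U hU
    exact union_sdiff_cancel_right (subset_sdiff.mp (mem_powersetCard.mp hU).1).2

theorem card_filter_superset_powersetCard_le [Nonempty ι] [DecidableEq ι]
    (hk : k ≤ Fintype.card ι) (T : Finset ι) : (#{S ∈ powersetCard k univ | T ⊆ S} : ℝ) ≤
      (Fintype.card ι).choose k * ((k : ℝ) / Fintype.card ι) ^ #T := by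
  rcases le_or_gt #T k with hT | hT
  · rw [card_filter_superset_powersetCard hT]
    exact Nat.cast_choose_sub_le_choose_mul_div_pow (Fintype.card_pos (α := ι)) hT hk
  · have hempty : {S ∈ powersetCard k (univ : Finset ι) | T ⊆ S} = ∅ :=
      filter_false_of_mem fun S hS hTS =>
        hT.not_ge ((card_le_card hTS).trans_eq (mem_powersetCard.mp hS).2)
    rw [hempty, card_empty, Nat.cast_zero]
    positivity

theorem sum_powersetCard_prod_le [Nonempty ι] (hk : k ≤ Fintype.card ι) {y : ι → ℝ}
    (hy : ∀ i, 1 ≤ y i) : ∑ S ∈ powersetCard k univ, ∏ i ∈ S, y i ≤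
      (Fintype.card ι).choose k *
        ∏ i, (1 - (k : ℝ) / Fintype.card ι + (k : ℝ) / Fintype.card ι * y i) := by
  classical
  set p := (k : ℝ) / Fintype.card ι
  set w : Finset ι → ℝ := fun T => ∏ i ∈ T, (y i - 1)
  have hw : ∀ T, 0 ≤ w T := fun T => prod_nonneg fun i _ => sub_nonneg.mpr (hy i)
  calc ∑ S ∈ powersetCard k univ, ∏ i ∈ S, y i
      = ∑ S ∈ powersetCard k univ, ∑ T ∈ S.powerset, w T := by
        simp only [w, ← prod_one_add, add_sub_cancel]
    _ = ∑ T ∈ univ.powerset, ∑ S ∈ powersetCard k univ with T ⊆ S, w T :=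
        sum_comm' fun S T => by simp
    _ = ∑ T ∈ univ.powerset, #{S ∈ powersetCard k univ | T ⊆ S} * w T := by
        simp only [sum_const, nsmul_eq_mul]
    _ ≤ ∑ T ∈ univ.powerset, (Fintype.card ι).choose k * p ^ #T * w T := by
        gcongr with T
        · exact hw T
        · exact card_filter_superset_powersetCard_le hk T
    _ = (Fintype.card ι).choose k * ∏ i, (1 - p + p * y i) := by
        simp only [mul_assoc, ← mul_sum, w, ← prod_const, ← prod_mul_distrib, ← prod_one_add]
        congr 1
        exact prod_congr rfl fun i _ => by ring

theorem sum_powersetCard_exp_le [Nonempty ι] (hk : k ≤ Fintype.card ι) {a : ι → ℝ}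
    (ha : ∀ i, 0 ≤ a i) {l : ℝ} (hl : 0 ≤ l) :
    ∑ S ∈ powersetCard k univ, exp (l * ∑ i ∈ S, a i) ≤ (Fintype.card ι).choose k *
      exp (l * ((k : ℝ) / Fintype.card ι * ∑ i, a i) + l ^ 2 * (∑ i, a i ^ 2) / 8) := by
  set p := (k : ℝ) / Fintype.card ι
  have hp0 : 0 ≤ p := by positivity
  have hp1 : p ≤ 1 := div_le_one_of_le₀ (by exact_mod_cast hk) (by positivity)
  calc ∑ S ∈ powersetCard k univ, exp (l * ∑ i ∈ S, a i)
      = ∑ S ∈ powersetCard k univ, ∏ i ∈ S, exp (l * a i) := by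
        simp only [mul_sum, exp_sum]
    _ ≤ (Fintype.card ι).choose k * ∏ i, (1 - p + p * exp (l * a i)) :=
        sum_powersetCard_prod_le hk fun i => one_le_exp (mul_nonneg hl (ha i))
    _ ≤ (Fintype.card ι).choose k * ∏ i, exp (p * (l * a i) + (l * a i) ^ 2 / 8) := by
        gcongr with i
        exact one_sub_add_mul_exp_le_exp hp0 hp1 _
    _ = (Fintype.card ι).choose k * exp (l * (p * ∑ i, a i) + l ^ 2 * (∑ i, a i ^ 2) / 8) := by
        rw [← exp_sum, sum_add_distrib, ← sum_div]
        simp only [mul_pow, ← mul_sum]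
        congr 2
        ring

theorem card_filter_lt_sum_sub_le [Nonempty ι] (hk : k ≤ Fintype.card ι) {a : ι → ℝ}
    (ha : ∀ i, 0 ≤ a i) {c t : ℝ} (hc : 0 < c) (hac : ∑ i, a i ^ 2 ≤ c) (ht : 0 ≤ t) :
    (#{S ∈ powersetCard k univ | t < (∑ i ∈ S, a i) - (k : ℝ) / Fintype.card ι * ∑ i, a i} : ℝ)
      ≤ (Fintype.card ι).choose k * exp (-2 * t ^ 2 / c) := by
  set μ := (k : ℝ) / Fintype.card ι * ∑ i, a i
  -- Chernoff bound with the optimal exponent `l = 4 t / c`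
  set l := 4 * t / c
  have hl : 0 ≤ l := by positivity
  have hmarkov : (#{S ∈ powersetCard k univ | t < (∑ i ∈ S, a i) - μ} : ℝ) * exp (l * (μ + t)) ≤
      (Fintype.card ι).choose k * exp (l * μ + l ^ 2 * c / 8) := calc
    _ = ∑ S ∈ powersetCard k univ with t < (∑ i ∈ S, a i) - μ, exp (l * (μ + t)) := by
        rw [sum_const, nsmul_eq_mul]
    _ ≤ ∑ S ∈ powersetCard k univ with t < (∑ i ∈ S, a i) - μ, exp (l * ∑ i ∈ S, a i) :=
        sum_le_sum fun S hS => by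
          have := (mem_filter.mp hS).2
          gcongr
          linarith
    _ ≤ ∑ S ∈ powersetCard k univ, exp (l * ∑ i ∈ S, a i) :=
        sum_le_sum_of_subset_of_nonneg (filter_subset _ _) fun _ _ _ => (exp_pos _).le
    _ ≤ (Fintype.card ι).choose k * exp (l * μ + l ^ 2 * (∑ i, a i ^ 2) / 8) :=
        sum_powersetCard_exp_le hk ha hl
    _ ≤ (Fintype.card ι).choose k * exp (l * μ + l ^ 2 * c / 8) := by gcongr
  have hexp : exp (l * μ + l ^ 2 * c / 8) / exp (l * (μ + t)) = exp (-2 * t ^ 2 / c) := by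
    rw [← exp_sub]
    congr 1
    simp only [l]
    field_simp
    ring
  rw [← hexp, mul_div_assoc', le_div_iff₀ (exp_pos _)]
  exact hmarkov

theorem card_filter_powersetCard_compl [DecidableEq ι] (hk : k ≤ Fintype.card ι)
    (q : Finset ι → Prop) [DecidablePred q] : #{S ∈ powersetCard k univ | q Sᶜ} =
      #{S ∈ powersetCard (Fintype.card ι - k) univ | q S} := by
  refine card_bij' (fun S _ => Sᶜ) (fun U _ => Uᶜ) ?_ ?_ ?_ ?_
  · intro S hS
    obtain ⟨hSk, hqS⟩ := mem_filter.mp hS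
    exact mem_filter.mpr ⟨mem_powersetCard_univ.mpr (by rw [card_compl,
      (mem_powersetCard_univ.mp hSk)]), hqS⟩
  · intro U hU
    obtain ⟨hUk, hqU⟩ := mem_filter.mp hU
    refine mem_filter.mpr ⟨mem_powersetCard_univ.mpr ?_, by rwa [compl_compl]⟩
    rw [card_compl, mem_powersetCard_univ.mp hUk]
    omega
  · exact fun S _ => compl_compl S
  · exact fun U _ => compl_compl U

theorem card_filter_lt_abs_sum_sub_le [Nonempty ι] (hk : k ≤ Fintype.card ι) {a : ι → ℝ}
    (ha : ∀ i, 0 ≤ a i) {c t : ℝ} (hc : 0 < c) (hac : ∑ i, a i ^ 2 ≤ c) (ht : 0 ≤ t) :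
    (#{S ∈ powersetCard k univ |
        t < |(∑ i ∈ S, a i) - (k : ℝ) / Fintype.card ι * ∑ i, a i|} : ℝ)
      ≤ 2 * (Fintype.card ι).choose k * exp (-2 * t ^ 2 / c) := by
  classical
  set n := Fintype.card ι
  have hn : (n : ℝ) ≠ 0 := by positivity
  have hlower : #{S ∈ powersetCard k univ | t < -((∑ i ∈ S, a i) - (k : ℝ) / n * ∑ i, a i)} =
      #{S ∈ powersetCard (n - k) univ |
        t < (∑ i ∈ S, a i) - ((n - k : ℕ) : ℝ) / n * ∑ i, a i} := by
    rw [← card_filter_powersetCard_compl hk]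
    refine congrArg card (filter_congr fun S _ => ?_)
    rw [← sum_compl_add_sum S a, Nat.cast_sub hk]
    field_simp
    ring_nf
  have hupper := card_filter_lt_sum_sub_le hk ha hc hac ht
  have hlower' := card_filter_lt_sum_sub_le (Nat.sub_le n k) ha hc hac ht
  rw [Nat.choose_symm hk, ← hlower] at hlower'
  simp only [lt_abs, filter_or]
  calc _ ≤ (#{S ∈ powersetCard k univ | t < (∑ i ∈ S, a i) - (k : ℝ) / n * ∑ i, a i} : ℝ) +
        #{S ∈ powersetCard k univ | t < -((∑ i ∈ S, a i) - (k : ℝ) / n * ∑ i, a i)} := by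
        exact_mod_cast card_union_le _ _
    _ ≤ _ := by linarith

theorem sum_sq_le_sum_mul_sup (a : ι → ℕ) :
    ∑ i, (a i : ℝ) ^ 2 ≤ (∑ i, (a i : ℝ)) * (univ.sup a : ℕ) := by
  rw [sum_mul]
  gcongr with i
  rw [sq]
  gcongr
  exact le_sup (mem_univ i)

end

theorem one_sub_mul_card_le_card_filter {α : Type*} {s : Finset α} {p : α → Prop}
    [DecidablePred p] {δ : ℝ} (h : (#{x ∈ s | ¬p x} : ℝ) ≤ δ * #s) :
    (1 - δ) * #s ≤ #{x ∈ s | p x} := by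
  have := card_filter_add_card_filter_not (s := s) p
  rw [← this, Nat.cast_add] at h ⊢
  linarith

theorem sample_without_replacement_concentration_general (n k : ℕ) (hk : k ≤ n)
    (a : Fin n → ℕ) (δ : ℝ) (hδ0 : 0 < δ) (hδ4 : δ < 1 / 4) :
    (1 - δ) * ((Finset.powersetCard k (Finset.univ : Finset (Fin n))).card : ℝ) ≤
      (((Finset.powersetCard k (Finset.univ : Finset (Fin n))).filter fun S =>
          |(∑ i ∈ S, (a i : ℝ)) - ((k : ℝ) / n) * ∑ i, (a i : ℝ)| ≤
            Real.sqrt ((∑ i, (a i : ℝ)) * ((Finset.univ.sup a : ℕ) : ℝ) *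
              Real.log ((n : ℝ) / δ))).card : ℝ) := by
  set c := (∑ i, (a i : ℝ)) * ((univ.sup a : ℕ) : ℝ)
  set L := log (n / δ)
  refine one_sub_mul_card_le_card_filter ?_
  simp only [not_le]
  by_cases ha : ∀ i, a i = 0
  · rw [filter_false_of_mem fun S _ => by simp [ha], card_empty, Nat.cast_zero]
    positivity
  obtain ⟨i₀, hi₀⟩ := not_forall.mp ha
  have : Nonempty (Fin n) := ⟨i₀⟩
  have hn : (1 : ℝ) ≤ n := by exact_mod_cast i₀.pos
  have hc : 0 < c := calc
    0 < (a i₀ : ℝ) ^ 2 := by positivity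
    _ ≤ ∑ i, (a i : ℝ) ^ 2 := single_le_sum (fun i _ => sq_nonneg (a i : ℝ)) (mem_univ i₀)
    _ ≤ c := sum_sq_le_sum_mul_sup a
  have hL : 0 < L := log_pos ((one_lt_div hδ0).mpr (by linarith))
  have hexp : exp (-2 * √(c * L) ^ 2 / c) = (δ / n) ^ 2 := by
    have hlog : log (δ / n) = -L := by rw [← log_inv, inv_div]
    rw [sq_sqrt (by positivity), sq, ← exp_log (show 0 < δ / n by positivity), ← exp_add, hlog]
    congr 1
    field_simp
    ring
  have hbad := card_filter_lt_abs_sum_sub_le (hk.trans_eq (Fintype.card_fin n).symm)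
    (fun i => Nat.cast_nonneg (a i)) hc (sum_sq_le_sum_mul_sup a) (sqrt_nonneg (c * L))
  have hfrac : 2 * (δ / n) ^ 2 ≤ δ := by
    have := div_le_self hδ0.le hn
    nlinarith [div_nonneg hδ0.le (zero_le_one.trans hn)]
  rw [card_powersetCard, card_univ, Fintype.card_fin]
  calc _ ≤ 2 * (n.choose k : ℝ) * exp (-2 * √(c * L) ^ 2 / c) := by
        rwa [Fintype.card_fin] at hbad
    _ = (n.choose k : ℝ) * (2 * (δ / n) ^ 2) := by rw [hexp]; ring
    _ ≤ δ * n.choose k := by rw [mul_comm δ]; gcongr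

/-- Concentration for sampling without replacement: for a uniformly random `k`-element
subset `S` of `[n]`, with probability at least `1 − δ` the sum `∑_{i∈S} aᵢ` deviates from
its mean `(k/n)·A` by at most `√(A · a_max · log(n/δ))`. Formulated by counting: at least
a `(1 − δ)`-fraction of the `k`-subsets satisfy the deviation bound. -/
theorem sample_without_replacement_concentration (n k : ℕ) (hn : 0 < n) (hk : k ≤ n)
    (a : Fin n → ℕ) (δ : ℝ) (hδ0 : 0 < δ) (hδ4 : δ < 1 / 4) :
    (1 - δ) * ((Finset.powersetCard k (Finset.univ : Finset (Fin n))).card : ℝ) ≤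
      (((Finset.powersetCard k (Finset.univ : Finset (Fin n))).filter fun S =>
          |(∑ i ∈ S, (a i : ℝ)) - ((k : ℝ) / n) * ∑ i, (a i : ℝ)| ≤
            Real.sqrt ((∑ i, (a i : ℝ)) * ((Finset.univ.sup a : ℕ) : ℝ) *
              Real.log ((n : ℝ) / δ))).card : ℝ) :=
  sample_without_replacement_concentration_general n k hk a δ hδ0 hδ4
end

section
/- Let I be a set of n items with weights w_i ≤ w_max and profits p_i ≥ 1, and knapsack capacity t with total item weight Σᵢ wᵢ > t. Let P_I[k] denote the maximum profit of a subset of items with total weight at most k. Then for any Δ ≥ 2·w_max with t − 2Δ ≥ 0, the interval [t − 2Δ, t − Δ] contains a break point of P_I, i.e., there exists k in that interval with P_I[k−1] < P_I[k]. In particular, P_I[t − 2Δ] < P_I[t − Δ]. -/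
/-- `maxProfit n w p k` is the maximum total profit of a subset of the `n` items with
total weight at most `k` (the profit sequence `P_I[k]`). -/
def maxProfit (n : ℕ) (w p : Fin n → ℕ) (k : ℕ) : ℕ :=
  (((Finset.univ : Finset (Finset (Fin n))).filter fun S => (∑ i ∈ S, w i) ≤ k).sup'
    ⟨∅, by simp⟩) fun S => ∑ i ∈ S, p i

lemma exists_bp (P : ℕ → ℕ) (a b : ℕ) (hab : a ≤ b) (hlt : P a < P b) :
    ∃ k, a < k ∧ k ≤ b ∧ P (k - 1) < P k := by
  induction b with
  | zero =>
    have : a = 0 := by omega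
    subst this
    exact absurd hlt (lt_irrefl _)
  | succ b ih =>
    have hne : a ≠ b + 1 := by
      intro h; subst h; exact absurd hlt (lt_irrefl _)
    have hab' : a ≤ b := by omega
    by_cases h : P b < P (b + 1)
    · exact ⟨b + 1, by omega, le_refl _, by simpa using h⟩
    · obtain ⟨k, hk1, hk2, hk3⟩ := ih hab' (lt_of_lt_of_le hlt (by omega))
      exact ⟨k, hk1, by omega, hk3⟩

/-- If all weights are in `[1, w_max]`, all profits are positive, the total weight exceeds
`t`, and `Δ ≥ 2·w_max` with `2Δ ≤ t`, then the interval `[t − 2Δ, t − Δ]` contains a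
break point of the profit sequence; in particular `P_I[t − 2Δ] < P_I[t − Δ]`. -/
theorem breakpoint_in_interval (n t wmax Δ : ℕ) (w p : Fin n → ℕ)
    (hw : ∀ i, 1 ≤ w i ∧ w i ≤ wmax) (hp : ∀ i, 1 ≤ p i)
    (htot : t < ∑ i, w i) (hΔ : 2 * wmax ≤ Δ) (hΔt : 2 * Δ ≤ t) :
    (∃ k, t - 2 * Δ ≤ k ∧ k ≤ t - Δ ∧ maxProfit n w p (k - 1) < maxProfit n w p k) ∧
    maxProfit n w p (t - 2 * Δ) < maxProfit n w p (t - Δ) := by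
  set a := t - 2 * Δ with ha
  set b := t - Δ with hb
  have hab : a ≤ b := by omega
  -- key strict inequality
  have key : maxProfit n w p a < maxProfit n w p b := by
    obtain ⟨S, hS, hSval⟩ := Finset.exists_mem_eq_sup'
      (⟨∅, by simp⟩ : (((Finset.univ : Finset (Finset (Fin n))).filter
        fun S => (∑ i ∈ S, w i) ≤ a)).Nonempty) (fun S => ∑ i ∈ S, p i)
    simp only [Finset.mem_filter, Finset.mem_univ, true_and] at hS
    -- S is not all items
    have hne : S ≠ Finset.univ := by
      intro h
      subst h
      omega
    obtain ⟨j, hj⟩ : ∃ j, j ∉ S := by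
      by_contra hc
      push_neg at hc
      exact hne (Finset.eq_univ_iff_forall.mpr hc)
    have hins : (∑ i ∈ insert j S, w i) ≤ b := by
      rw [Finset.sum_insert hj]
      have := (hw j).2
      omega
    have hle : (∑ i ∈ insert j S, p i) ≤ maxProfit n w p b := by
      unfold maxProfit
      exact Finset.le_sup' (fun S => ∑ i ∈ S, p i)
        (Finset.mem_filter.mpr ⟨Finset.mem_univ _, hins⟩)
    have : (∑ i ∈ insert j S, p i) = p j + ∑ i ∈ S, p i := Finset.sum_insert hj
    have hpj := hp j
    have : maxProfit n w p a < ∑ i ∈ insert j S, p i := by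
      rw [maxProfit, hSval, this]
      omega
    omega
  refine ⟨?_, key⟩
  obtain ⟨k, hk1, hk2, hk3⟩ := exists_bp (maxProfit n w p) a b hab key
  exact ⟨k, by omega, hk2, hk3⟩
end

section
/- Let I be a set of n items with positive integer weights w_i and profits p_i ≤ p_max. Define W_I[k] = min{Σᵢ wᵢxᵢ : x ∈ {0,1}^n, Σᵢ pᵢxᵢ ≥ k}. If k is a break point of W_I (i.e., W_I[k] < W_I[k+1]) and k ≥ p_max, then the interval [k − p_max, k) contains a break point of W_I, i.e., W_I[k − p_max] < W_I[k]. -/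
/-- `minWeight n w p k` is the minimum total weight of a subset of the `n` items with
total profit at least `k` (the weight sequence `W_I[k]`), with value `⊤` if no such
subset exists. -/
noncomputable def minWeight (n : ℕ) (w p : Fin n → ℕ) (k : ℕ) : ℕ∞ :=
  (((Finset.univ : Finset (Finset (Fin n))).filter fun S => k ≤ ∑ i ∈ S, p i).inf)
    fun S => ((∑ i ∈ S, w i : ℕ) : ℕ∞)

/-!
Since `W_I[k] < W_I[k+1] ≤ ⊤`, some set `S` of profit at least `k` is optimal for `k`;
it is nonempty as `k > 0`. Dropping any item `i` of `S` strictly lowers the weight and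
leaves profit at least `k - p_i ≥ k - p_max`, hence `W_I[k - p_max] ≤ W_I[k - p_i] < W_I[k]`.
-/

namespace minWeight

variable {n : ℕ} {w p : Fin n → ℕ} {k l : ℕ}

theorem le_sum {S : Finset (Fin n)} (h : k ≤ ∑ i ∈ S, p i) :
    minWeight n w p k ≤ ((∑ i ∈ S, w i : ℕ) : ℕ∞) :=
  Finset.inf_le (Finset.mem_filter.mpr ⟨Finset.mem_univ S, h⟩)

theorem mono (hkl : k ≤ l) : minWeight n w p k ≤ minWeight n w p l :=
  Finset.le_inf fun _ hS => le_sum (hkl.trans (Finset.mem_filter.mp hS).2)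

theorem exists_eq_sum (h : minWeight n w p k ≠ ⊤) :
    ∃ S : Finset (Fin n), k ≤ ∑ i ∈ S, p i ∧ minWeight n w p k = ((∑ i ∈ S, w i : ℕ) : ℕ∞) := by
  have hne : (Finset.univ.filter fun S : Finset (Fin n) => k ≤ ∑ i ∈ S, p i).Nonempty := by
    by_contra hempty
    exact h (by simp [minWeight, Finset.not_nonempty_iff_eq_empty.mp hempty])
  obtain ⟨S, hS, hSinf⟩ := Finset.exists_mem_eq_inf _ hne fun S => ((∑ i ∈ S, w i : ℕ) : ℕ∞)
  exact ⟨S, (Finset.mem_filter.mp hS).2, hSinf⟩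

theorem sub_lt {S : Finset (Fin n)} {i : Fin n} (hSk : k ≤ ∑ j ∈ S, p j)
    (hS : minWeight n w p k = ((∑ j ∈ S, w j : ℕ) : ℕ∞)) (hi : i ∈ S) (hwi : 1 ≤ w i) :
    minWeight n w p (k - p i) < minWeight n w p k := by
  have hp := Finset.add_sum_erase S p hi
  have hw := Finset.add_sum_erase S w hi
  calc minWeight n w p (k - p i)
      ≤ ((∑ j ∈ S.erase i, w j : ℕ) : ℕ∞) := le_sum (by omega)
    _ < ((∑ j ∈ S, w j : ℕ) : ℕ∞) := by exact_mod_cast (by omega)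
    _ = minWeight n w p k := hS.symm

end minWeight

/-- If all weights are positive and all profits lie in `[1, p_max]`, and `k ≥ p_max` is a
break point of the weight sequence `W_I` (i.e. `W_I[k] < W_I[k+1]`), then the interval
`[k − p_max, k)` contains a break point, i.e. `W_I[k − p_max] < W_I[k]`. -/
theorem weight_sequence_breakpoint (n pmax : ℕ) (w p : Fin n → ℕ)
    (hw : ∀ i, 1 ≤ w i) (hp : ∀ i, 1 ≤ p i ∧ p i ≤ pmax) (hpmax : 0 < pmax)
    (k : ℕ) (hk : pmax ≤ k)
    (hbreak : minWeight n w p k < minWeight n w p (k + 1)) :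
    minWeight n w p (k - pmax) < minWeight n w p k := by
  obtain ⟨S, hSk, hS⟩ := minWeight.exists_eq_sum (hbreak.trans_le le_top).ne
  obtain ⟨i, hi⟩ : S.Nonempty := Finset.nonempty_of_sum_ne_zero (f := p) (by omega)
  calc minWeight n w p (k - pmax)
      ≤ minWeight n w p (k - p i) := minWeight.mono (by have := (hp i).2; omega)
    _ < minWeight n w p k := minWeight.sub_lt hSk hS hi (hw i)
end

section
/- Consider a Knapsack instance with items sorted so that p₁/w₁ ≥ p₂/w₂ ≥ ⋯ ≥ pₙ/wₙ, maximum prefix solution P = {1,…,j} where j is maximal with w₁+⋯+w_j ≤ t, and ρ = p_j/w_j. Partition items into good G = {i : pᵢ/wᵢ > 2ρ}, bad B = {i : pᵢ/wᵢ < ρ/2}, and medium items. Let Z be any optimal solution. Then the set Δ = ((P\Z) ∪ (Z\P)) ∩ (G ∪ B) satisfies w(Δ) ≤ 10·w_max and p(Δ) ≤ 10·p_max. -/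
lemma cover_lemma {α : Type*} [DecidableEq α] (w : α → ℕ) :
    ∀ (F : Finset α) (c : ℕ), 1 ≤ c → c ≤ ∑ i ∈ F, w i →
      ∃ R r, R ⊆ F ∧ r ∈ R ∧ c ≤ ∑ i ∈ R, w i ∧ (∑ i ∈ R.erase r, w i) < c := by
  intro F
  induction F using Finset.strongInduction with
  | _ F ih =>
    intro c hc hcF
    have hF : F.Nonempty := by
      by_contra h
      rw [Finset.not_nonempty_iff_eq_empty] at h
      simp [h] at hcF
      omega
    obtain ⟨x, hx⟩ := hF
    by_cases h : (∑ i ∈ F.erase x, w i) < c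
    · exact ⟨F, x, le_refl _, hx, hcF, h⟩
    · obtain ⟨R, r, hRF, hrR, h1, h2⟩ :=
        ih (F.erase x) (Finset.erase_ssubset hx) c hc (le_of_not_gt h)
      exact ⟨R, r, hRF.trans (Finset.erase_subset _ _), hrR, h1, h2⟩

lemma fill_lemma {α : Type*} [DecidableEq α] (w : α → ℕ) :
    ∀ (F : Finset α) (c : ℕ), (∑ i ∈ F, w i ≤ c) ∨
      ∃ S x, S ⊆ F ∧ x ∈ F ∧ x ∉ S ∧ (∑ i ∈ S, w i) ≤ c ∧ c < (∑ i ∈ S, w i) + w x := by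
  intro F
  induction F using Finset.strongInduction with
  | _ F ih =>
    intro c
    by_cases h : ∑ i ∈ F, w i ≤ c
    · exact Or.inl h
    · push_neg at h
      have hF : F.Nonempty := by
        rcases Finset.eq_empty_or_nonempty F with h' | h'
        · rw [h'] at h; simp at h
        · exact h'
      obtain ⟨x, hx⟩ := hF
      rcases ih (F.erase x) (Finset.erase_ssubset hx) c with h' | ⟨S, y, hSF, hyF, hyS, h1, h2⟩
      · refine Or.inr ⟨F.erase x, x, Finset.erase_subset _ _, hx, Finset.notMem_erase _ _, h', ?_⟩
        rw [Finset.sum_erase_add _ _ hx]; exact h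
      · exact Or.inr ⟨S, y, hSF.trans (Finset.erase_subset _ _),
          Finset.mem_of_mem_erase hyF, hyS, h1, h2⟩

/-- For a Knapsack instance sorted by non-increasing profit-to-weight ratio, with maximum
prefix solution `P = {i : i < jstar}` and `ρ = p_ℓ/w_ℓ` the ratio of the last prefix item
`ℓ = jstar − 1`, define the good items `G` (ratio `> 2ρ`) and bad items `Bad` (ratio
`< ρ/2`). For any optimal solution `Z`, the restriction `Δ` of the symmetric difference
`(P \ Z) ∪ (Z \ P)` to `G ∪ Bad` satisfies `w(Δ) ≤ 10·w_max` and `p(Δ) ≤ 10·p_max`. -/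
theorem symmDiff_good_bad_small (n t wmax pmax jstar : ℕ) (w p : Fin n → ℕ)
    (hw1 : ∀ i, 1 ≤ w i) (hwmax : ∀ i, w i ≤ wmax) (hwt : wmax ≤ t)
    (hp1 : ∀ i, 1 ≤ p i) (hpmax : ∀ i, p i ≤ pmax)
    (hsorted : ∀ i j : Fin n, i ≤ j → p j * w i ≤ p i * w j)
    (hj1 : 1 ≤ jstar) (hjn : jstar ≤ n)
    (hfit : (∑ i ∈ Finset.univ.filter (fun i : Fin n => i.1 < jstar), w i) ≤ t)
    (hmaxPrefix : jstar = n ∨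
      t < ∑ i ∈ Finset.univ.filter (fun i : Fin n => i.1 < jstar + 1), w i)
    (Z : Finset (Fin n)) (hZfeas : (∑ i ∈ Z, w i) ≤ t)
    (hZopt : ∀ S : Finset (Fin n), (∑ i ∈ S, w i) ≤ t → (∑ i ∈ S, p i) ≤ ∑ i ∈ Z, p i) :
    let P : Finset (Fin n) := Finset.univ.filter fun i => i.1 < jstar
    let ℓ : Fin n := ⟨jstar - 1, by omega⟩
    let G : Finset (Fin n) := Finset.univ.filter fun i => 2 * p ℓ * w i < p i * w ℓ
    let Bad : Finset (Fin n) := Finset.univ.filter fun i => 2 * p i * w ℓ < p ℓ * w i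
    let Δ : Finset (Fin n) := ((P \ Z) ∪ (Z \ P)) ∩ (G ∪ Bad)
    (∑ i ∈ Δ, w i) ≤ 10 * wmax ∧ (∑ i ∈ Δ, p i) ≤ 10 * pmax := by
  intro P ℓ G Bad Δ
  have hPmem : ∀ i : Fin n, i ∈ P ↔ i.1 < jstar := by
    intro i; simp [P]
  have hGmem : ∀ i : Fin n, i ∈ G ↔ 2 * p ℓ * w i < p i * w ℓ := by
    intro i; simp [G]
  have hBmem : ∀ i : Fin n, i ∈ Bad ↔ 2 * p i * w ℓ < p ℓ * w i := by
    intro i; simp [Bad]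
  have hℓval : (ℓ : Fin n).1 = jstar - 1 := rfl
  -- ratio facts
  have hsortP : ∀ i ∈ P, p ℓ * w i ≤ p i * w ℓ := by
    intro i hi
    have := (hPmem i).mp hi
    exact hsorted i ℓ (by rw [Fin.le_def, hℓval]; omega)
  have hsortQ : ∀ i : Fin n, jstar ≤ i.1 → p i * w ℓ ≤ p ℓ * w i := by
    intro i hi
    exact hsorted ℓ i (by rw [Fin.le_def, hℓval]; omega)
  have hGsubP : G ⊆ P := by
    intro i hi
    rw [hGmem] at hi
    rw [hPmem]
    by_contra h
    have := hsortQ i (by omega)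
    nlinarith
  have hBadQ : ∀ i ∈ Bad, jstar ≤ i.1 := by
    intro i hi
    rw [hBmem] at hi
    by_contra h
    have := hsortP i ((hPmem i).mpr (by omega))
    nlinarith
  -- sums of ratio inequalities over subsets
  have hPsum : ∀ T : Finset (Fin n), T ⊆ P →
      p ℓ * (∑ i ∈ T, w i) ≤ (∑ i ∈ T, p i) * w ℓ := by
    intro T hT
    calc p ℓ * (∑ i ∈ T, w i) = ∑ i ∈ T, p ℓ * w i := Finset.mul_sum _ _ _
      _ ≤ ∑ i ∈ T, p i * w ℓ := Finset.sum_le_sum (fun i hi => hsortP i (hT hi))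
      _ = (∑ i ∈ T, p i) * w ℓ := (Finset.sum_mul _ _ _).symm
  have hQsum : ∀ T : Finset (Fin n), (∀ i ∈ T, jstar ≤ i.1) →
      (∑ i ∈ T, p i) * w ℓ ≤ p ℓ * (∑ i ∈ T, w i) := by
    intro T hT
    calc (∑ i ∈ T, p i) * w ℓ = ∑ i ∈ T, p i * w ℓ := Finset.sum_mul _ _ _
      _ ≤ ∑ i ∈ T, p ℓ * w i := Finset.sum_le_sum (fun i hi => hsortQ i (hT i hi))
      _ = p ℓ * (∑ i ∈ T, w i) := (Finset.mul_sum _ _ _).symm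
  have hZPQ : ∀ i ∈ Z \ P, jstar ≤ i.1 := by
    intro i hi
    have := (Finset.mem_sdiff.mp hi).2
    rw [hPmem] at this
    omega
  -- the two halves
  have hA : (∑ i ∈ G \ Z, w i) ≤ 2 * wmax ∧ (∑ i ∈ G \ Z, p i) ≤ 2 * pmax := by
    rcases Finset.eq_empty_or_nonempty (G \ Z) with hAe | hAne
    · rw [hAe]; simp
    · have hAP : (G \ Z) ⊆ P := Finset.Subset.trans (Finset.sdiff_subset) hGsubP
      have hAZ : ∀ i ∈ G \ Z, i ∉ Z := fun i hi => (Finset.mem_sdiff.mp hi).2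
      have hAkey : 2 * p ℓ * (∑ i ∈ G \ Z, w i) + (G \ Z).card
          ≤ (∑ i ∈ G \ Z, p i) * w ℓ := by
        calc 2 * p ℓ * (∑ i ∈ G \ Z, w i) + (G \ Z).card
            = ∑ i ∈ G \ Z, (2 * p ℓ * w i + 1) := by
              rw [Finset.sum_add_distrib, Finset.sum_const, Finset.mul_sum, smul_eq_mul, mul_one]
          _ ≤ ∑ i ∈ G \ Z, p i * w ℓ := Finset.sum_le_sum (fun i hi =>
              (hGmem i).mp (Finset.mem_sdiff.mp hi).1)
          _ = (∑ i ∈ G \ Z, p i) * w ℓ := (Finset.sum_mul _ _ _).symm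
      have hcard : 1 ≤ (G \ Z).card := Finset.Nonempty.card_pos hAne
      have ha1 : 1 ≤ ∑ i ∈ G \ Z, w i := by
        calc 1 ≤ (G \ Z).card := hcard
          _ = ∑ i ∈ G \ Z, 1 := (Finset.card_eq_sum_ones _)
          _ ≤ ∑ i ∈ G \ Z, w i := Finset.sum_le_sum (fun i _ => hw1 i)
      rcases le_or_gt (∑ i ∈ G \ Z, w i) (∑ i ∈ Z \ P, w i) with hle | hlt
      · -- exchange: remove R ⊆ Z \ P, add G \ Z
        obtain ⟨R, r, hRZP, hrR, hRge, hRlt⟩ := cover_lemma w (Z \ P) _ ha1 hle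
        have hRZ : R ⊆ Z := hRZP.trans (Finset.sdiff_subset)
        have hdisj : Disjoint (Z \ R) (G \ Z) := by
          rw [Finset.disjoint_right]
          intro i hi
          exact fun hiz => hAZ i hi (Finset.mem_sdiff.mp hiz).1
        have hZsplitw : (∑ i ∈ Z \ R, w i) + (∑ i ∈ R, w i) = ∑ i ∈ Z, w i :=
          Finset.sum_sdiff hRZ
        have hZsplitp : (∑ i ∈ Z \ R, p i) + (∑ i ∈ R, p i) = ∑ i ∈ Z, p i :=
          Finset.sum_sdiff hRZ
        have hfeas : (∑ i ∈ (Z \ R) ∪ (G \ Z), w i) ≤ t := by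
          rw [Finset.sum_union hdisj]
          omega
        have hopt := hZopt _ hfeas
        rw [Finset.sum_union hdisj] at hopt
        have hpApR : (∑ i ∈ G \ Z, p i) ≤ ∑ i ∈ R, p i := by omega
        -- ratio bounds for R
        have hRq : (∑ i ∈ R, p i) * w ℓ ≤ p ℓ * (∑ i ∈ R, w i) :=
          hQsum R (fun i hi => hZPQ i (hRZP hi))
        have hReq : (∑ i ∈ R.erase r, p i) * w ℓ ≤ p ℓ * (∑ i ∈ R.erase r, w i) :=
          hQsum _ (fun i hi => hZPQ i (hRZP (Finset.erase_subset _ _ hi)))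
        have hsplitRw : (∑ i ∈ R.erase r, w i) + w r = ∑ i ∈ R, w i :=
          Finset.sum_erase_add _ _ hrR
        have hsplitRp : (∑ i ∈ R.erase r, p i) + p r = ∑ i ∈ R, p i :=
          Finset.sum_erase_add _ _ hrR
        -- abbreviations
        set a := ∑ i ∈ G \ Z, w i with hadef
        set pa := ∑ i ∈ G \ Z, p i with hpadef
        set e := ∑ i ∈ R.erase r, w i with hedef
        set pe := ∑ i ∈ R.erase r, p i with hpedef
        have hK1 : 2 * p ℓ * a + 1 ≤ pa * w ℓ := le_trans (by omega) hAkey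
        have hK2 : pa * w ℓ ≤ pe * w ℓ + p r * w ℓ := by
          have : pa ≤ pe + p r := by omega
          calc pa * w ℓ ≤ (pe + p r) * w ℓ := Nat.mul_le_mul_right _ this
            _ = pe * w ℓ + p r * w ℓ := add_mul _ _ _
        have hK6 : p r * w ℓ ≤ p ℓ * w r := hsortQ r (hZPQ r (hRZP hrR))
        have hK4 : e + 1 ≤ a := hRlt
        have hmul1 : p ℓ * (e + 1) ≤ p ℓ * a := Nat.mul_le_mul_left _ hK4
        have hmul2 : p ℓ * w r ≤ p ℓ * wmax := Nat.mul_le_mul_left _ (hwmax r)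
        have hple : p ℓ * e ≤ p ℓ * a := Nat.mul_le_mul_left _ (by omega)
        have hprmax : p r * w ℓ ≤ pmax * w ℓ := Nat.mul_le_mul_right _ (hpmax r)
        have hmul1' : p ℓ * e + p ℓ ≤ p ℓ * a := by
          rw [Nat.mul_add, Nat.mul_one] at hmul1
          exact hmul1
        constructor
        · -- weight bound
          have h1 : pa * w ℓ ≤ p ℓ * e + p ℓ * wmax := by
            calc pa * w ℓ ≤ pe * w ℓ + p r * w ℓ := hK2
              _ ≤ p ℓ * e + p ℓ * w r := by omega
              _ ≤ p ℓ * e + p ℓ * wmax := by omega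
          have hfin : p ℓ * a < p ℓ * wmax := by
            linarith only [h1, hK1, hmul1', hp1 ℓ]
          have := Nat.lt_of_mul_lt_mul_left hfin
          omega
        · -- profit bound
          have h1 : pa * w ℓ ≤ p ℓ * a + pmax * w ℓ := by
            calc pa * w ℓ ≤ pe * w ℓ + p r * w ℓ := hK2
              _ ≤ p ℓ * e + pmax * w ℓ := by omega
              _ ≤ p ℓ * a + pmax * w ℓ := by omega
          have h2 : p ℓ * a < pmax * w ℓ := by linarith only [hK1, h1]
          have h3 : pa * w ℓ < 2 * pmax * w ℓ := by linarith only [h1, h2]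
          have := Nat.lt_of_mul_lt_mul_right h3
          omega
      · -- Z doesn't have enough weight outside P : contradiction
        exfalso
        have hdisj : Disjoint (Z ∩ P) (G \ Z) := by
          rw [Finset.disjoint_right]
          intro i hi
          exact fun hiz => hAZ i hi (Finset.mem_inter.mp hiz).1
        have hsub : (Z ∩ P) ∪ (G \ Z) ⊆ P :=
          Finset.union_subset (Finset.inter_subset_right) hAP
        have hfeas : (∑ i ∈ (Z ∩ P) ∪ (G \ Z), w i) ≤ t := by
          calc (∑ i ∈ (Z ∩ P) ∪ (G \ Z), w i) ≤ ∑ i ∈ P, w i :=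
              Finset.sum_le_sum_of_subset hsub
            _ ≤ t := hfit
        have hopt := hZopt _ hfeas
        rw [Finset.sum_union hdisj] at hopt
        have hZsplitp : (∑ i ∈ Z ∩ P, p i) + (∑ i ∈ Z \ P, p i) = ∑ i ∈ Z, p i :=
          Finset.sum_inter_add_sum_sdiff _ _ _
        have hpAle : (∑ i ∈ G \ Z, p i) ≤ ∑ i ∈ Z \ P, p i := by omega
        have hZPq : (∑ i ∈ Z \ P, p i) * w ℓ ≤ p ℓ * (∑ i ∈ Z \ P, w i) :=
          hQsum _ hZPQ
        have hK1 : 2 * p ℓ * (∑ i ∈ G \ Z, w i) + 1 ≤ (∑ i ∈ G \ Z, p i) * w ℓ :=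
          le_trans (by omega) hAkey
        have hc1 : (∑ i ∈ G \ Z, p i) * w ℓ ≤ (∑ i ∈ Z \ P, p i) * w ℓ :=
          Nat.mul_le_mul_right _ hpAle
        have hc2 : p ℓ * ((∑ i ∈ Z \ P, w i) + 1) ≤ p ℓ * (∑ i ∈ G \ Z, w i) :=
          Nat.mul_le_mul_left _ hlt
        have hc2' : p ℓ * (∑ i ∈ Z \ P, w i) + p ℓ ≤ p ℓ * (∑ i ∈ G \ Z, w i) := by
          rw [Nat.mul_add, Nat.mul_one] at hc2
          exact hc2
        have e1 : 2 * p ℓ * (∑ i ∈ G \ Z, w i) + 1 ≤ p ℓ * (∑ i ∈ Z \ P, w i) :=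
          le_trans hK1 (le_trans hc1 hZPq)
        have e2 : 2 * (p ℓ * (∑ i ∈ G \ Z, w i)) = 2 * p ℓ * (∑ i ∈ G \ Z, w i) := by ring
        rw [← e2] at e1
        set LL := p ℓ with hLL
        set Y := LL * (∑ i ∈ G \ Z, w i) with hY
        set X := LL * (∑ i ∈ Z \ P, w i) with hX
        omega
  have hD : (∑ i ∈ Z ∩ Bad, w i) ≤ 2 * wmax ∧ (∑ i ∈ Z ∩ Bad, p i) ≤ 2 * pmax := by
    rcases Finset.eq_empty_or_nonempty (Z ∩ Bad) with hDe | hDne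
    · rw [hDe]; simp
    · obtain ⟨i0, hi0⟩ := hDne
      have hi0B := (Finset.mem_inter.mp hi0).2
      have hjn' : jstar < n := lt_of_le_of_lt (hBadQ i0 hi0B) i0.2
      set m : Fin n := ⟨jstar, hjn'⟩ with hmdef
      have hmval : (m : ℕ) = jstar := rfl
      have ht : t < (∑ i ∈ P, w i) + w m := by
        rcases hmaxPrefix with h | h
        · omega
        · have hset : Finset.univ.filter (fun i : Fin n => i.1 < jstar + 1) = insert m P := by
            ext i
            simp only [Finset.mem_filter, Finset.mem_univ, true_and, Finset.mem_insert,
              hPmem, Fin.ext_iff]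
            omega
          have hmP : m ∉ P := by
            rw [hPmem]
            omega
          rw [hset, Finset.sum_insert hmP] at h
          omega
      have hDZP : Z ∩ Bad ⊆ Z \ P := by
        intro i hi
        have h1 := Finset.mem_inter.mp hi
        refine Finset.mem_sdiff.mpr ⟨h1.1, ?_⟩
        rw [hPmem]
        have := hBadQ i h1.2
        omega
      have hDZ : Z ∩ Bad ⊆ Z := Finset.inter_subset_left
      have hswap : 2 * ((∑ i ∈ Z ∩ Bad, p i) * w ℓ) = ∑ i ∈ Z ∩ Bad, 2 * p i * w ℓ := by
        rw [Finset.sum_mul, Finset.mul_sum]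
        exact Finset.sum_congr rfl (fun i _ => by ring)
      have hDkey : 2 * ((∑ i ∈ Z ∩ Bad, p i) * w ℓ) + 1 ≤ p ℓ * (∑ i ∈ Z ∩ Bad, w i) := by
        have hcard : 1 ≤ (Z ∩ Bad).card := Finset.Nonempty.card_pos ⟨i0, hi0⟩
        calc 2 * ((∑ i ∈ Z ∩ Bad, p i) * w ℓ) + 1
            ≤ ∑ i ∈ Z ∩ Bad, 2 * p i * w ℓ + (Z ∩ Bad).card := by omega
          _ = ∑ i ∈ Z ∩ Bad, (2 * p i * w ℓ + 1) := by
              rw [Finset.sum_add_distrib, Finset.sum_const, smul_eq_mul, mul_one]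
          _ ≤ ∑ i ∈ Z ∩ Bad, p ℓ * w i := Finset.sum_le_sum (fun i hi =>
              (hBmem i).mp (Finset.mem_inter.mp hi).2)
          _ = p ℓ * (∑ i ∈ Z ∩ Bad, w i) := (Finset.mul_sum _ _ _).symm
      have hDm : (∑ i ∈ Z ∩ Bad, p i) * w m ≤ p m * (∑ i ∈ Z ∩ Bad, w i) := by
        calc (∑ i ∈ Z ∩ Bad, p i) * w m = ∑ i ∈ Z ∩ Bad, p i * w m := Finset.sum_mul _ _ _
          _ ≤ ∑ i ∈ Z ∩ Bad, p m * w i := Finset.sum_le_sum (fun i hi => by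
              refine hsorted m i ?_
              rw [Fin.le_def]
              have := hBadQ i (Finset.mem_inter.mp hi).2
              omega)
          _ = p m * (∑ i ∈ Z ∩ Bad, w i) := (Finset.mul_sum _ _ _).symm
      have hZsplitw : (∑ i ∈ Z \ (Z ∩ Bad), w i) + (∑ i ∈ Z ∩ Bad, w i) = ∑ i ∈ Z, w i :=
        Finset.sum_sdiff hDZ
      have hZsplitp : (∑ i ∈ Z \ (Z ∩ Bad), p i) + (∑ i ∈ Z ∩ Bad, p i) = ∑ i ∈ Z, p i :=
        Finset.sum_sdiff hDZ
      -- key weight comparison: d < w(P \ Z) + w m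
      have hPsplitw : (∑ i ∈ P ∩ Z, w i) + (∑ i ∈ P \ Z, w i) = ∑ i ∈ P, w i :=
        Finset.sum_inter_add_sum_sdiff _ _ _
      have hZsplitw2 : (∑ i ∈ Z ∩ P, w i) + (∑ i ∈ Z \ P, w i) = ∑ i ∈ Z, w i :=
        Finset.sum_inter_add_sum_sdiff _ _ _
      have hinterw : (∑ i ∈ P ∩ Z, w i) = ∑ i ∈ Z ∩ P, w i := by
        rw [Finset.inter_comm]
      have hDinZP : (∑ i ∈ Z ∩ Bad, w i) ≤ ∑ i ∈ Z \ P, w i :=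
        Finset.sum_le_sum_of_subset hDZP
      have hkeyw : (∑ i ∈ Z ∩ Bad, w i) < (∑ i ∈ P \ Z, w i) + w m := by
        omega
      rcases fill_lemma w (P \ Z) (∑ i ∈ Z ∩ Bad, w i) with hfill |
        ⟨S, x, hSsub, hxPZ, hxS, hSle, hSgt⟩
      · -- everything in P \ Z fits
        have hdisj : Disjoint (Z \ (Z ∩ Bad)) (P \ Z) := by
          rw [Finset.disjoint_right]
          intro i hi
          exact fun hiz => (Finset.mem_sdiff.mp hi).2 (Finset.mem_sdiff.mp hiz).1
        have hfeas : (∑ i ∈ (Z \ (Z ∩ Bad)) ∪ (P \ Z), w i) ≤ t := by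
          rw [Finset.sum_union hdisj]
          omega
        have hopt := hZopt _ hfeas
        rw [Finset.sum_union hdisj] at hopt
        have hple : (∑ i ∈ P \ Z, p i) ≤ ∑ i ∈ Z ∩ Bad, p i := by omega
        rcases le_or_gt (∑ i ∈ Z ∩ Bad, w i) (2 * w m) with hcase | hcase
        · constructor
          · have := hwmax m
            omega
          · have h1 : (∑ i ∈ Z ∩ Bad, p i) * w m ≤ (2 * p m) * w m := by
              calc (∑ i ∈ Z ∩ Bad, p i) * w m ≤ p m * (∑ i ∈ Z ∩ Bad, w i) := hDm
                _ ≤ p m * (2 * w m) := Nat.mul_le_mul_left _ hcase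
                _ = (2 * p m) * w m := by ring
            have h2 : (∑ i ∈ Z ∩ Bad, p i) ≤ 2 * p m :=
              Nat.le_of_mul_le_mul_right h1 (hw1 m)
            have := hpmax m
            omega
        · exfalso
          have hs2 : (∑ i ∈ Z ∩ Bad, w i) + 1 ≤ 2 * (∑ i ∈ P \ Z, w i) := by omega
          have hps : p ℓ * (∑ i ∈ P \ Z, w i) ≤ (∑ i ∈ P \ Z, p i) * w ℓ :=
            hPsum _ (Finset.sdiff_subset)
          have c1 : p ℓ * ((∑ i ∈ Z ∩ Bad, w i) + 1) ≤ p ℓ * (2 * (∑ i ∈ P \ Z, w i)) :=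
            Nat.mul_le_mul_left _ hs2
          have c1' : p ℓ * (∑ i ∈ Z ∩ Bad, w i) + p ℓ ≤ 2 * (p ℓ * (∑ i ∈ P \ Z, w i)) := by
            rw [Nat.mul_add, Nat.mul_one] at c1
            calc p ℓ * (∑ i ∈ Z ∩ Bad, w i) + p ℓ ≤ p ℓ * (2 * (∑ i ∈ P \ Z, w i)) := c1
              _ = 2 * (p ℓ * (∑ i ∈ P \ Z, w i)) := by ring
          have c4 : (∑ i ∈ P \ Z, p i) * w ℓ ≤ (∑ i ∈ Z ∩ Bad, p i) * w ℓ :=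
            Nat.mul_le_mul_right _ hple
          set A1 := p ℓ * (∑ i ∈ Z ∩ Bad, w i) with hA1
          set B1 := p ℓ * (∑ i ∈ P \ Z, w i) with hB1
          set C1 := (∑ i ∈ Z ∩ Bad, p i) * w ℓ with hC1
          set E1 := (∑ i ∈ P \ Z, p i) * w ℓ with hE1
          omega
      · -- greedy S with witness x
        have hSP : S ⊆ P := hSsub.trans (Finset.sdiff_subset)
        have hxP : x ∈ P := (Finset.mem_sdiff.mp hxPZ).1
        have hdisj : Disjoint (Z \ (Z ∩ Bad)) S := by
          rw [Finset.disjoint_right]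
          intro i hi
          exact fun hiz => (Finset.mem_sdiff.mp (hSsub hi)).2 (Finset.mem_sdiff.mp hiz).1
        have hfeas : (∑ i ∈ (Z \ (Z ∩ Bad)) ∪ S, w i) ≤ t := by
          rw [Finset.sum_union hdisj]
          omega
        have hopt := hZopt _ hfeas
        rw [Finset.sum_union hdisj] at hopt
        have hple : (∑ i ∈ S, p i) ≤ ∑ i ∈ Z ∩ Bad, p i := by omega
        have hps : p ℓ * (∑ i ∈ S, w i) ≤ (∑ i ∈ S, p i) * w ℓ := hPsum _ hSP
        have hpx : p ℓ * w x ≤ p x * w ℓ := hsortP x hxP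
        have c4 : (∑ i ∈ S, p i) * w ℓ ≤ (∑ i ∈ Z ∩ Bad, p i) * w ℓ :=
          Nat.mul_le_mul_right _ hple
        have cpx : p x * w ℓ ≤ pmax * w ℓ := Nat.mul_le_mul_right _ (hpmax x)
        constructor
        · -- weight bound
          by_contra hcon
          push_neg at hcon
          have hs2 : (∑ i ∈ Z ∩ Bad, w i) + 3 ≤ 2 * (∑ i ∈ S, w i) := by
            have := hwmax x
            omega
          have c1 : p ℓ * ((∑ i ∈ Z ∩ Bad, w i) + 3) ≤ p ℓ * (2 * (∑ i ∈ S, w i)) :=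
            Nat.mul_le_mul_left _ hs2
          have c1' : p ℓ * (∑ i ∈ Z ∩ Bad, w i) + 3 * p ℓ ≤ 2 * (p ℓ * (∑ i ∈ S, w i)) := by
            calc p ℓ * (∑ i ∈ Z ∩ Bad, w i) + 3 * p ℓ
                = p ℓ * ((∑ i ∈ Z ∩ Bad, w i) + 3) := by ring
              _ ≤ p ℓ * (2 * (∑ i ∈ S, w i)) := c1
              _ = 2 * (p ℓ * (∑ i ∈ S, w i)) := by ring
          have hpl := hp1 ℓ
          set A1 := p ℓ * (∑ i ∈ Z ∩ Bad, w i) with hA1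
          set B1 := p ℓ * (∑ i ∈ S, w i) with hB1
          set C1 := (∑ i ∈ Z ∩ Bad, p i) * w ℓ with hC1
          set E1 := (∑ i ∈ S, p i) * w ℓ with hE1
          set L1 := p ℓ with hL1
          omega
        · -- profit bound
          have hd1 : (∑ i ∈ Z ∩ Bad, w i) + 1 ≤ (∑ i ∈ S, w i) + w x := hSgt
          have c1 : p ℓ * ((∑ i ∈ Z ∩ Bad, w i) + 1) ≤ p ℓ * ((∑ i ∈ S, w i) + w x) :=
            Nat.mul_le_mul_left _ hd1
          have c1' : p ℓ * (∑ i ∈ Z ∩ Bad, w i) + p ℓ ≤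
              p ℓ * (∑ i ∈ S, w i) + p ℓ * w x := by
            calc p ℓ * (∑ i ∈ Z ∩ Bad, w i) + p ℓ
                = p ℓ * ((∑ i ∈ Z ∩ Bad, w i) + 1) := by ring
              _ ≤ p ℓ * ((∑ i ∈ S, w i) + w x) := c1
              _ = p ℓ * (∑ i ∈ S, w i) + p ℓ * w x := by ring
          have hfin : (∑ i ∈ Z ∩ Bad, p i) * w ℓ < pmax * w ℓ := by
            set A1 := p ℓ * (∑ i ∈ Z ∩ Bad, w i) with hA1
            set B1 := p ℓ * (∑ i ∈ S, w i) with hB1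
            set C1 := (∑ i ∈ Z ∩ Bad, p i) * w ℓ with hC1
            set E1 := (∑ i ∈ S, p i) * w ℓ with hE1
            set F1 := p ℓ * w x with hF1
            set G1 := p x * w ℓ with hG1
            set H1 := pmax * w ℓ with hH1
            omega
          have := Nat.lt_of_mul_lt_mul_right hfin
          omega
  -- assemble
  have hΔsub : Δ ⊆ (G \ Z) ∪ (Z ∩ Bad) := by
    intro i hi
    have hi' := Finset.mem_inter.mp hi
    have h1 := Finset.mem_union.mp hi'.1
    have h2 := Finset.mem_union.mp hi'.2
    rcases h2 with hg | hb
    · have hiP : i ∈ P := hGsubP hg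
      have : i ∉ Z := by
        rcases h1 with h | h
        · exact (Finset.mem_sdiff.mp h).2
        · exact absurd hiP (Finset.mem_sdiff.mp h).2
      exact Finset.mem_union_left _ (Finset.mem_sdiff.mpr ⟨hg, this⟩)
    · have hiP : i ∉ P := by
        rw [hPmem]
        have := hBadQ i hb
        omega
      have hiZ : i ∈ Z := by
        rcases h1 with h | h
        · exact absurd (Finset.mem_sdiff.mp h).1 hiP
        · exact (Finset.mem_sdiff.mp h).1
      exact Finset.mem_union_right _ (Finset.mem_inter.mpr ⟨hiZ, hb⟩)
  have hdisjAD : Disjoint (G \ Z) (Z ∩ Bad) := by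
    rw [Finset.disjoint_left]
    intro i hi₁ hi₂
    exact (Finset.mem_sdiff.mp hi₁).2 (Finset.mem_inter.mp hi₂).1
  constructor
  · calc (∑ i ∈ Δ, w i) ≤ ∑ i ∈ (G \ Z) ∪ (Z ∩ Bad), w i :=
        Finset.sum_le_sum_of_subset hΔsub
      _ = (∑ i ∈ G \ Z, w i) + (∑ i ∈ Z ∩ Bad, w i) := Finset.sum_union hdisjAD
      _ ≤ 10 * wmax := by omega
  · calc (∑ i ∈ Δ, p i) ≤ ∑ i ∈ (G \ Z) ∪ (Z ∩ Bad), p i :=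
        Finset.sum_le_sum_of_subset hΔsub
      _ = (∑ i ∈ G \ Z, p i) + (∑ i ∈ Z ∩ Bad, p i) := Finset.sum_union hdisjAD
      _ ≤ 10 * pmax := by omega
end

section
/- In the setting of the maximum prefix solution P and any optimal solution Z for a Knapsack instance where not all items fit (w([n]) > t): both w(P) and w(Z) lie in the interval (t − w_max, t], and hence |w(P) − w(Z)| < w_max. -/
/-- If not all items fit (`∑ wᵢ > t`), then both the maximum prefix solution `P` and any
optimal solution `Z` have total weight in `(t − w_max, t]`, and hence
`|w(P) − w(Z)| < w_max`. -/
theorem prefix_and_opt_weight_close (n t wmax jstar : ℕ) (w p : Fin n → ℕ)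
    (hw1 : ∀ i, 1 ≤ w i) (hwmax : ∀ i, w i ≤ wmax) (hwt : wmax ≤ t)
    (hp1 : ∀ i, 1 ≤ p i)
    (hsorted : ∀ i j : Fin n, i ≤ j → p j * w i ≤ p i * w j)
    (htot : t < ∑ i, w i)
    (hjn : jstar ≤ n)
    (hfit : (∑ i ∈ Finset.univ.filter (fun i : Fin n => i.1 < jstar), w i) ≤ t)
    (hmaxPrefix : jstar = n ∨
      t < ∑ i ∈ Finset.univ.filter (fun i : Fin n => i.1 < jstar + 1), w i)
    (Z : Finset (Fin n)) (hZfeas : (∑ i ∈ Z, w i) ≤ t)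
    (hZopt : ∀ S : Finset (Fin n), (∑ i ∈ S, w i) ≤ t → (∑ i ∈ S, p i) ≤ ∑ i ∈ Z, p i) :
    let P : Finset (Fin n) := Finset.univ.filter fun i => i.1 < jstar
    ((t : ℤ) - wmax < ∑ i ∈ P, (w i : ℤ)) ∧ ((∑ i ∈ P, (w i : ℤ)) ≤ t) ∧
    ((t : ℤ) - wmax < ∑ i ∈ Z, (w i : ℤ)) ∧ ((∑ i ∈ Z, (w i : ℤ)) ≤ t) ∧
    |(∑ i ∈ P, (w i : ℤ)) - ∑ i ∈ Z, (w i : ℤ)| < wmax := by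
  intro P
  -- P lower bound in ℕ
  have ha2 : t < (∑ i ∈ P, w i) + wmax := by
    rcases hmaxPrefix with h | h
    · -- jstar = n: P = univ, contradiction with hfit and htot
      exfalso
      have hPuniv : (Finset.univ.filter (fun i : Fin n => i.1 < jstar)) = Finset.univ := by
        ext i; simp [h, i.isLt]
      rw [hPuniv] at hfit
      omega
    · have hsplit : (Finset.univ.filter (fun i : Fin n => i.1 < jstar + 1)) =
          P ∪ (Finset.univ.filter (fun i : Fin n => i.1 = jstar)) := by
        ext i; simp only [Finset.mem_filter, Finset.mem_union, Finset.mem_univ, true_and, P]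
        omega
      have hdisj : Disjoint P (Finset.univ.filter (fun i : Fin n => i.1 = jstar)) := by
        rw [Finset.disjoint_left]
        intro i hi hi'
        simp only [Finset.mem_filter, Finset.mem_univ, true_and, P] at hi hi'
        omega
      rw [hsplit, Finset.sum_union hdisj] at h
      have hb : (∑ i ∈ Finset.univ.filter (fun i : Fin n => i.1 = jstar), w i) ≤ wmax := by
        by_cases hj : jstar < n
        · have : (Finset.univ.filter (fun i : Fin n => i.1 = jstar)) = {⟨jstar, hj⟩} := by
            ext i; simp [Fin.ext_iff]
          rw [this, Finset.sum_singleton]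
          exact hwmax _
        · have : (Finset.univ.filter (fun i : Fin n => i.1 = jstar)) = ∅ := by
            ext i; simp only [Finset.mem_filter, Finset.mem_univ, true_and,
              Finset.notMem_empty, iff_false]
            have := i.isLt; omega
          rw [this, Finset.sum_empty]
          exact Nat.zero_le _
      omega
  -- Z lower bound in ℕ
  have hb2 : t < (∑ i ∈ Z, w i) + wmax := by
    by_contra h
    push_neg at h
    have hZne : Z ≠ Finset.univ := by
      intro hZ; rw [hZ] at hZfeas; omega
    obtain ⟨j, hj⟩ : ∃ j, j ∉ Z := by
      by_contra hall
      push_neg at hall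
      exact hZne (Finset.eq_univ_iff_forall.mpr hall)
    have hfeas : (∑ i ∈ insert j Z, w i) ≤ t := by
      rw [Finset.sum_insert hj]
      have := hwmax j; omega
    have hle := hZopt _ hfeas
    rw [Finset.sum_insert hj] at hle
    have := hp1 j
    omega
  have e1 : (∑ i ∈ P, (w i : ℤ)) = ((∑ i ∈ P, w i : ℕ) : ℤ) := by push_cast; ring
  have e2 : (∑ i ∈ Z, (w i : ℤ)) = ((∑ i ∈ Z, w i : ℕ) : ℤ) := by push_cast; ring
  have hPle : (∑ i ∈ P, (w i : ℤ)) ≤ t := by rw [e1]; exact_mod_cast hfit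
  have hPgt : (t : ℤ) - wmax < ∑ i ∈ P, (w i : ℤ) := by rw [e1]; omega
  have hZle : (∑ i ∈ Z, (w i : ℤ)) ≤ t := by rw [e2]; exact_mod_cast hZfeas
  have hZgt : (t : ℤ) - wmax < ∑ i ∈ Z, (w i : ℤ) := by rw [e2]; omega
  refine ⟨hPgt, hPle, hZgt, hZle, ?_⟩
  rw [abs_lt]
  omega
end

section
/- Let p ≥ 1 and ℓ ≥ 0 be integers, and let a, b, c be nonnegative integers with (a mod p) ≤ p/3, (b mod p) ≤ p/3, and a + b = c. Define a^(ℓ) = ⌊(a mod p)/2^ℓ⌋, b^(ℓ) = ⌊(b mod p)/2^ℓ⌋. Suppose c^(ℓ) is any integer satisfying ⌊((c mod p) − 2(2^ℓ − 1))/2^ℓ⌋ ≤ c^(ℓ) ≤ ⌊((c mod p) + 2(2^ℓ − 1))/2^ℓ⌋. Then a^(ℓ) + b^(ℓ) − c^(ℓ) ∈ [−4, 3]. -/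
/-!
Since the remainders do not carry, `c mod p = A + B` with `A = a mod p`, `B = b mod p`, so `c^(ℓ)`
lies between `⌊(A + B - 2(L - 1)) / L⌋` and `⌊(A + B + 2(L - 1)) / L⌋`, where `L = 2^ℓ`.
Writing `A + B = (⌊A/L⌋ + ⌊B/L⌋) L + r` with `0 ≤ r ≤ 2(L - 1)`, both ends lie within
`[⌊A/L⌋ + ⌊B/L⌋ - 2, ⌊A/L⌋ + ⌊B/L⌋ + 3]`.
-/

theorem add_mod_of_three_mul_mod_le {a b p : ℕ} (ha : 3 * (a % p) ≤ p) (hb : 3 * (b % p) ≤ p) :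
    (a + b) % p = a % p + b % p := by
  rcases Nat.eq_zero_or_pos p with rfl | hp
  · simp
  · exact Nat.add_mod_of_add_mod_lt (by omega)

section FloorWindow

variable {L : ℤ} (A B : ℤ)

theorem ediv_add_ediv_sub_two_le_ediv (hL : 0 < L) :
    A / L + B / L - 2 ≤ (A + B - 2 * (L - 1)) / L :=
  Int.le_ediv_of_mul_le hL <| by
    linarith [Int.ediv_mul_le A hL.ne', Int.ediv_mul_le B hL.ne']

theorem ediv_le_ediv_add_ediv_add_three (hL : 0 < L) :
    (A + B + 2 * (L - 1)) / L ≤ A / L + B / L + 3 :=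
  Int.lt_add_one_iff.mp <| (Int.ediv_lt_iff_lt_mul hL).mpr <| by
    linarith [Int.lt_ediv_add_one_mul_self A hL, Int.lt_ediv_add_one_mul_self B hL]

end FloorWindow

theorem approx_quotient_additivity_general (p : ℕ) (l : ℕ) (a b c : ℕ)
    (ha : 3 * (a % p) ≤ p) (hb : 3 * (b % p) ≤ p) (habc : a + b = c)
    (cl : ℤ)
    (hcl1 : Int.fdiv (((c % p : ℕ) : ℤ) - 2 * (2 ^ l - 1)) (2 ^ l) ≤ cl)
    (hcl2 : cl ≤ Int.fdiv (((c % p : ℕ) : ℤ) + 2 * (2 ^ l - 1)) (2 ^ l)) :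
    -4 ≤ (((a % p) / 2 ^ l : ℕ) : ℤ) + (((b % p) / 2 ^ l : ℕ) : ℤ) - cl ∧
      (((a % p) / 2 ^ l : ℕ) : ℤ) + (((b % p) / 2 ^ l : ℕ) : ℤ) - cl ≤ 3 := by
  have hL : (0 : ℤ) < 2 ^ l := by positivity
  rw [← habc, add_mod_of_three_mul_mod_le ha hb, Int.fdiv_eq_ediv_of_nonneg _ hL.le] at hcl1 hcl2
  push_cast [Int.natCast_div] at hcl1 hcl2 ⊢
  have lower := ediv_add_ediv_sub_two_le_ediv ((a : ℤ) % p) ((b : ℤ) % p) hL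
  have upper := ediv_le_ediv_add_ediv_add_three ((a : ℤ) % p) ((b : ℤ) % p) hL
  constructor <;> linarith

/-- Approximate additivity of scaled-down remainders: with no-carry remainders
(`(a mod p), (b mod p) ≤ p/3`) and `a + b = c`, if `a^(ℓ) = ⌊(a mod p)/2^ℓ⌋`,
`b^(ℓ) = ⌊(b mod p)/2^ℓ⌋`, and `c^(ℓ)` is any integer with
`⌊((c mod p) − 2(2^ℓ−1))/2^ℓ⌋ ≤ c^(ℓ) ≤ ⌊((c mod p) + 2(2^ℓ−1))/2^ℓ⌋`, then
`a^(ℓ) + b^(ℓ) − c^(ℓ) ∈ [−4, 3]`. -/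
theorem approx_quotient_additivity (p : ℕ) (hp : 0 < p) (l : ℕ) (a b c : ℕ)
    (ha : 3 * (a % p) ≤ p) (hb : 3 * (b % p) ≤ p) (habc : a + b = c)
    (cl : ℤ)
    (hcl1 : Int.fdiv (((c % p : ℕ) : ℤ) - 2 * (2 ^ l - 1)) (2 ^ l) ≤ cl)
    (hcl2 : cl ≤ Int.fdiv (((c % p : ℕ) : ℤ) + 2 * (2 ^ l - 1)) (2 ^ l)) :
    -4 ≤ (((a % p) / 2 ^ l : ℕ) : ℤ) + (((b % p) / 2 ^ l : ℕ) : ℤ) - cl ∧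
      (((a % p) / 2 ^ l : ℕ) : ℤ) + (((b % p) / 2 ^ l : ℕ) : ℤ) - cl ≤ 3 :=
  approx_quotient_additivity_general p l a b c ha hb habc cl hcl1 hcl2
end
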